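/- arXiv:2106.14280 — 8 statements merged into one kernel-verified Lean document; each statement's English description precedes it below -/
import Mathlib

section
/- Let m, d, n be natural numbers and δ ∈ (0,1). Let (T_k)_k be a finite family of subspaces of C^n with total dimension ∑_k dim(T_k) ≤ d, and let M_k be the orthogonal projection onto T_k. Let Q be the (nonempty) set of density matrices ρ on C^n such that Tr(ρ M_k) > δ for at least m many indices k. Then there exists an orthogonal projection M on C^n with Tr(M) ≤ 6d/(δm) and Tr(Mρ) ≥ δ²/36 for every ρ ∈ Q. -/
open Matrix ComplexOrder

namespace DMAux

variable {n : ℕ}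

/-- Matrices to Euclidean space, to use Hilbert space norm machinery. -/
noncomputable def toE (A : Matrix (Fin n) (Fin n) ℂ) : EuclideanSpace ℂ (Fin n × Fin n) :=
  (WithLp.equiv 2 _).symm (fun p => A p.1 p.2)

lemma toE_add (A B : Matrix (Fin n) (Fin n) ℂ) : toE (A + B) = toE A + toE B := rfl

lemma norm_toE_sq (A : Matrix (Fin n) (Fin n) ℂ) :
    ‖toE A‖ ^ 2 = ((Aᴴ * A).trace).re := by
  rw [EuclideanSpace.norm_eq, Real.sq_sqrt (by positivity)]
  have : (Aᴴ * A).trace = ∑ j, ∑ i, (starRingEnd ℂ) (A i j) * A i j := by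
    simp [Matrix.trace, Matrix.mul_apply, Matrix.diag, Matrix.conjTranspose_apply]
  rw [this, Complex.re_sum]
  simp_rw [Complex.re_sum]
  rw [Fintype.sum_prod_type, Finset.sum_comm]
  congr 1; funext j
  congr 1; funext i
  rw [mul_comm, Complex.mul_conj, Complex.ofReal_re, Complex.normSq_eq_norm_sq]
  rfl

lemma psd_of_proj {N : Matrix (Fin n) (Fin n) ℂ} (h1 : N.IsHermitian) (h2 : N * N = N) :
    N.PosSemidef := by
  have h := Matrix.posSemidef_conjTranspose_mul_self N
  rwa [h1, h2] at h

open scoped MatrixOrder in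
lemma trace_re_nonneg_of_psd {A : Matrix (Fin n) (Fin n) ℂ} (hA : A.PosSemidef) :
    0 ≤ A.trace.re := by
  have h := norm_toE_sq (n := n) (CFC.sqrt A)
  rw [(CFC.sqrt_nonneg A).posSemidef.1, CFC.sqrt_mul_sqrt_self A hA.nonneg] at h
  rw [← h]
  positivity

open scoped MatrixOrder in
lemma trace_mul_psd_nonneg {A B : Matrix (Fin n) (Fin n) ℂ} (hA : A.PosSemidef)
    (hB : B.PosSemidef) : 0 ≤ (A * B).trace.re := by
  have key : ((CFC.sqrt B)ᴴ * A * CFC.sqrt B).trace = (A * B).trace := by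
    rw [(CFC.sqrt_nonneg B).posSemidef.1, Matrix.trace_mul_cycle, CFC.sqrt_mul_sqrt_self B hB.nonneg, Matrix.trace_mul_comm]
  rw [← key]
  exact trace_re_nonneg_of_psd (hA.conjTranspose_mul_mul_same _)

lemma proj_quad (B X : Matrix (Fin n) (Fin n) ℂ) (hB : B.IsHermitian) (hBB : B * B = B) :
    (B * X)ᴴ * (B * X) = Xᴴ * (B * X) := by
  rw [Matrix.conjTranspose_mul, hB, Matrix.mul_assoc, ← Matrix.mul_assoc B B X, hBB]

lemma contract (N X : Matrix (Fin n) (Fin n) ℂ) (hN : N.IsHermitian) (hNN : N * N = N) :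
    ‖toE (N * X)‖ ≤ ‖toE X‖ := by
  have h1 : ‖toE (N * X)‖ ^ 2 ≤ ‖toE X‖ ^ 2 := by
    rw [norm_toE_sq, norm_toE_sq, proj_quad N X hN hNN]
    have key : Xᴴ * X = Xᴴ * (N * X) + Xᴴ * ((1 - N) * X) := by noncomm_ring
    have hpsd : (Xᴴ * ((1 - N) * X)).PosSemidef := by
      have h2 : ((1 : Matrix (Fin n) (Fin n) ℂ) - N) * (1 - N) = 1 - N := by
        rw [Matrix.mul_sub, Matrix.mul_one, Matrix.sub_mul, Matrix.one_mul, hNN]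
        abel
      have h3 : ((1 : Matrix (Fin n) (Fin n) ℂ) - N).IsHermitian := by
        unfold Matrix.IsHermitian at *
        rw [Matrix.conjTranspose_sub, Matrix.conjTranspose_one, hN]
      have := (psd_of_proj h3 h2).conjTranspose_mul_mul_same X
      rwa [Matrix.mul_assoc] at this
    have h4 := trace_re_nonneg_of_psd hpsd
    rw [key, Matrix.trace_add, Complex.add_re]
    linarith
  have := norm_nonneg (toE X)
  nlinarith [norm_nonneg (toE (N * X))]

end DMAux

open scoped MatrixOrder in
set_option maxHeartbeats 2000000 in
/-- approximating the set of density matrices δ-close to at least `m`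
of a family of subspaces (given by their orthogonal projections `M k`, with total
dimension `∑ Tr(M k) ≤ d`) by a single projection of trace at most `6d/(δm)`. -/
theorem density_matrix_approximation (m d n K : ℕ) (δ : ℝ) (hδ0 : 0 < δ) (hδ1 : δ < 1)
    (hm : 0 < m)
    (M : Fin K → Matrix (Fin n) (Fin n) ℂ)
    (hMherm : ∀ k, (M k).IsHermitian) (hMproj : ∀ k, M k * M k = M k)
    (hdim : ∑ k, ((M k).trace).re ≤ (d : ℝ))
    (Q : Set (Matrix (Fin n) (Fin n) ℂ))
    (hQ : Q = {ρ | ρ.PosSemidef ∧ ρ.trace = 1 ∧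
        m ≤ (Finset.univ.filter (fun k : Fin K => δ < ((ρ * M k).trace).re)).card})
    (hQne : Q.Nonempty) :
    ∃ P : Matrix (Fin n) (Fin n) ℂ, P.IsHermitian ∧ P * P = P ∧
      P.trace.re ≤ 6 * d / (δ * m) ∧ ∀ ρ ∈ Q, δ^2/36 ≤ ((P * ρ).trace).re := by
  classical
  set S : Matrix (Fin n) (Fin n) ℂ := ∑ k, M k with hSdef
  have hMpsd : ∀ k, (M k).PosSemidef := fun k => DMAux.psd_of_proj (hMherm k) (hMproj k)
  have hSpsd : S.PosSemidef := by
    apply Finset.sum_induction _ _ (fun a b ha hb => ha.add hb) _ (fun k _ => hMpsd k)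
    exact Matrix.PosSemidef.zero
  have hS : S.IsHermitian := hSpsd.1
  set μ : Fin n → ℝ := hS.eigenvalues with hμdef
  have hμ0 : ∀ i, 0 ≤ μ i := fun i => hSpsd.eigenvalues_nonneg i
  set θ : ℝ := δ * m / 6 with hθdef
  have hθ0 : 0 < θ := by positivity
  set V : Matrix (Fin n) (Fin n) ℂ := (Matrix.IsHermitian.eigenvectorUnitary hS : Matrix (Fin n) (Fin n) ℂ) with hVdef
  have hVW : V * star V = 1 := Matrix.mem_unitaryGroup_iff.mp (Matrix.IsHermitian.eigenvectorUnitary hS).2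
  have hWV : star V * V = 1 := Matrix.mem_unitaryGroup_iff'.mp (Matrix.IsHermitian.eigenvectorUnitary hS).2
  have hspec : S = V * Matrix.diagonal (RCLike.ofReal ∘ μ) * star V := hS.spectral_theorem
  set D : Matrix (Fin n) (Fin n) ℂ := Matrix.diagonal (fun i => if θ < μ i then 1 else 0) with hDdef
  set P : Matrix (Fin n) (Fin n) ℂ := V * D * star V with hPdef
  have hDH : Dᴴ = D := by
    rw [hDdef, Matrix.diagonal_conjTranspose]
    exact congrArg Matrix.diagonal (funext fun i => by simp only [Pi.star_apply]; split <;> simp)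
  have hD2 : D * D = D := by
    rw [hDdef, Matrix.diagonal_mul_diagonal]
    exact congrArg Matrix.diagonal (funext fun i => by split <;> simp)
  have hPH : P.IsHermitian := by
    unfold Matrix.IsHermitian
    rw [hPdef, Matrix.conjTranspose_mul, Matrix.conjTranspose_mul, hDH,
      ← Matrix.star_eq_conjTranspose, ← Matrix.star_eq_conjTranspose, star_star,
      Matrix.mul_assoc]
  have hPP : P * P = P := by
    rw [hPdef]
    simp only [Matrix.mul_assoc]
    rw [← Matrix.mul_assoc (star V) V, hWV, Matrix.one_mul, ← Matrix.mul_assoc D D, hD2]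
  have htrP : P.trace = D.trace := by
    rw [hPdef, Matrix.trace_mul_cycle, hWV, Matrix.one_mul]
  have hDtr : D.trace.re = ∑ i, (if θ < μ i then (1:ℝ) else 0) := by
    rw [hDdef, Matrix.trace_diagonal, Complex.re_sum]
    exact Finset.sum_congr rfl fun i _ => by split <;> simp
  have hStr : S.trace.re = ∑ i, μ i := by
    rw [hspec, Matrix.trace_mul_cycle, hWV, Matrix.one_mul, Matrix.trace_diagonal,
      Complex.re_sum]
    exact Finset.sum_congr rfl fun i _ => by simp [Function.comp]
  have hStr2 : S.trace.re = ∑ k, ((M k).trace).re := by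
    rw [hSdef, Matrix.trace_sum, Complex.re_sum]
  have hsum_le : ∑ i, μ i ≤ (d : ℝ) := by rw [← hStr, hStr2]; exact hdim
  have hbound : θ * P.trace.re ≤ (d : ℝ) := by
    have e1 : θ * P.trace.re = ∑ i, θ * (if θ < μ i then (1:ℝ) else 0) := by
      rw [htrP, hDtr, Finset.mul_sum]
    have e2 : ∑ i, θ * (if θ < μ i then (1:ℝ) else 0) ≤ ∑ i, μ i := by
      refine Finset.sum_le_sum fun i _ => ?_
      split
      · next h => simpa using h.le
      · simpa using hμ0 i
    linarith
  refine ⟨P, hPH, hPP, ?_, ?_⟩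
  · have h1 : P.trace.re ≤ (d : ℝ) / θ := by
      rw [le_div_iff₀ hθ0]
      linarith [hbound]
    have h2 : (d : ℝ) / θ = 6 * d / (δ * m) := by
      rw [hθdef]
      have hδm : δ * (m : ℝ) ≠ 0 := by positivity
      field_simp
    linarith
  · intro ρ hρmem
    rw [hQ] at hρmem
    obtain ⟨hρpsd, hρtr, hρcard⟩ := hρmem
    by_contra hcon
    push_neg at hcon
    -- hcon : (P * ρ).trace.re < δ^2/36
    set R := CFC.sqrt ρ with hRdef
    have hRH : Rᴴ = R := (CFC.sqrt_nonneg ρ).posSemidef.1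
    have hRR : R * R = ρ := CFC.sqrt_mul_sqrt_self ρ hρpsd.nonneg
    have h1PH : ((1 : Matrix (Fin n) (Fin n) ℂ) - P)ᴴ = 1 - P :=
      Matrix.isHermitian_one.sub hPH
    have h1PP : ((1 : Matrix (Fin n) (Fin n) ℂ) - P) * (1 - P) = 1 - P := by
      rw [Matrix.mul_sub, Matrix.mul_one, Matrix.sub_mul, Matrix.one_mul, hPP]
      abel
    -- decomposition of 1 - P
    have h1Pdecomp : (1 : Matrix (Fin n) (Fin n) ℂ) - P = V * (1 - D) * star V := by
      have : V * (1 - D) * star V = V * star V - V * D * star V := by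
        rw [Matrix.mul_sub, Matrix.mul_one, Matrix.sub_mul]
      rw [this, hVW, hPdef]
    have hXdecomp : (1 - P) * S * (1 - P)
        = V * ((1 - D) * Matrix.diagonal (RCLike.ofReal ∘ μ) * (1 - D)) * star V := by
      rw [h1Pdecomp, hspec]
      simp only [Matrix.mul_assoc]
      rw [← Matrix.mul_assoc (star V) V, hWV, Matrix.one_mul,
        ← Matrix.mul_assoc (star V) V, hWV, Matrix.one_mul]
    have hGdiag : (1 - D) * Matrix.diagonal (RCLike.ofReal ∘ μ) * (1 - D)
        = Matrix.diagonal (fun i => if θ < μ i then 0 else ((μ i : ℝ) : ℂ)) := by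
      rw [hDdef, ← Matrix.diagonal_one]
      rw [Matrix.diagonal_sub, Matrix.diagonal_mul_diagonal, Matrix.diagonal_mul_diagonal]
      refine congrArg _ (funext fun i => ?_)
      by_cases h : θ < μ i <;> simp [h, Function.comp]
    have hApsd : Matrix.PosSemidef
        (((θ : ℝ) : ℂ) • (1 : Matrix (Fin n) (Fin n) ℂ) - (1 - P) * S * (1 - P)) := by
      have e1 : V * (((θ : ℝ) : ℂ) • (1 : Matrix (Fin n) (Fin n) ℂ)) * star V
          = ((θ : ℝ) : ℂ) • (1 : Matrix (Fin n) (Fin n) ℂ) := by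
        rw [mul_smul_comm, Matrix.mul_one, smul_mul_assoc, hVW]
      have e2 : V * ((((θ : ℝ) : ℂ) • 1 - Matrix.diagonal (fun i => if θ < μ i then 0 else ((μ i : ℝ) : ℂ)))) * star V
          = ((θ : ℝ) : ℂ) • (1 : Matrix (Fin n) (Fin n) ℂ) - (1 - P) * S * (1 - P) := by
        rw [Matrix.mul_sub, Matrix.sub_mul, e1, hXdecomp, hGdiag]
      rw [← e2]
      have hdiagpsd : Matrix.PosSemidef
          ((((θ : ℝ) : ℂ) • 1 - Matrix.diagonal (fun i => if θ < μ i then 0 else ((μ i : ℝ) : ℂ)))) := by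
        rw [Matrix.smul_one_eq_diagonal, Matrix.diagonal_sub]
        refine Matrix.posSemidef_diagonal_iff.mpr fun i => ?_
        by_cases h : θ < μ i
        · simp only [h, if_true, sub_zero]
          exact_mod_cast Complex.zero_le_real.mpr hθ0.le
        · simp only [h, if_false]
          rw [← Complex.ofReal_sub]
          exact Complex.zero_le_real.mpr (by push_neg at h; linarith)
      have := hdiagpsd.mul_mul_conjTranspose_same V
      rwa [← Matrix.star_eq_conjTranspose] at this
    have hθtrace : ((1 - P) * S * (1 - P) * ρ).trace.re ≤ θ := by
      have h0 := DMAux.trace_mul_psd_nonneg hApsd hρpsd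
      have expand : (((θ : ℝ) : ℂ) • (1 : Matrix (Fin n) (Fin n) ℂ) - (1 - P) * S * (1 - P)) * ρ
          = ((θ : ℝ) : ℂ) • ρ - (1 - P) * S * (1 - P) * ρ := by
        rw [Matrix.sub_mul, smul_mul_assoc, Matrix.one_mul]
      rw [expand, Matrix.trace_sub, Matrix.trace_smul, hρtr, Complex.sub_re] at h0
      have : ((((θ : ℝ) : ℂ)) • (1 : ℂ)).re = θ := by simp
      linarith
    -- per-index quantities
    set G := Finset.univ.filter (fun k : Fin K => δ < ((ρ * M k).trace).re) with hGdef
    have hXsum : (1 - P) * S * (1 - P) * ρ = ∑ k, (1 - P) * M k * (1 - P) * ρ := by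
      rw [hSdef, Finset.mul_sum, Finset.sum_mul, Finset.sum_mul]
    have hak_nonneg : ∀ k : Fin K, 0 ≤ ((1 - P) * M k * (1 - P) * ρ).trace.re := by
      intro k
      have hpsd : ((1 - P) * M k * (1 - P)).PosSemidef := by
        have h := (hMpsd k).mul_mul_conjTranspose_same (1 - P)
        rwa [← Matrix.star_eq_conjTranspose, Matrix.star_eq_conjTranspose, h1PH] at h
      exact DMAux.trace_mul_psd_nonneg hpsd hρpsd
    have hak_large : ∀ k ∈ G, 25 * δ / 36 ≤ ((1 - P) * M k * (1 - P) * ρ).trace.re := by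
      intro k hk
      have hk' : δ < ((ρ * M k).trace).re := (Finset.mem_filter.mp hk).2
      -- norms
      have hx2 : ‖DMAux.toE (M k * R)‖ ^ 2 = ((ρ * M k).trace).re := by
        rw [DMAux.norm_toE_sq, DMAux.proj_quad _ _ (hMherm k) (hMproj k), hRH,
          Matrix.trace_mul_comm, Matrix.mul_assoc, hRR, Matrix.trace_mul_comm]
      have hy : ‖DMAux.toE (M k * (P * R))‖ ≤ ‖DMAux.toE (P * R)‖ :=
        DMAux.contract (M k) _ (hMherm k) (hMproj k)
      have hyP2 : ‖DMAux.toE (P * R)‖ ^ 2 = (P * ρ).trace.re := by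
        rw [DMAux.norm_toE_sq, DMAux.proj_quad _ _ hPH hPP, hRH,
          Matrix.trace_mul_comm, Matrix.mul_assoc, hRR]
      have hz2 : ‖DMAux.toE (M k * ((1 - P) * R))‖ ^ 2
          = ((1 - P) * M k * (1 - P) * ρ).trace.re := by
        rw [DMAux.norm_toE_sq, DMAux.proj_quad _ _ (hMherm k) (hMproj k),
          Matrix.conjTranspose_mul, hRH, h1PH]
        have e : (R * (1 - P)) * (M k * ((1 - P) * R))
            = R * ((1 - P) * M k * (1 - P)) * R := by
          simp only [Matrix.mul_assoc]
        rw [e, Matrix.trace_mul_cycle, hRR, Matrix.trace_mul_comm, Matrix.mul_assoc]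
      have hsplit : M k * R = M k * (P * R) + M k * ((1 - P) * R) := by noncomm_ring
      have htri : ‖DMAux.toE (M k * R)‖
          ≤ ‖DMAux.toE (M k * (P * R))‖ + ‖DMAux.toE (M k * ((1 - P) * R))‖ := by
        calc ‖DMAux.toE (M k * R)‖
            = ‖DMAux.toE (M k * (P * R)) + DMAux.toE (M k * ((1 - P) * R))‖ := by
              rw [← DMAux.toE_add, ← hsplit]
          _ ≤ _ := norm_add_le _ _
      set x := ‖DMAux.toE (M k * R)‖ with hxdef
      set y := ‖DMAux.toE (M k * (P * R))‖ with hydef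
      set z := ‖DMAux.toE (M k * ((1 - P) * R))‖ with hzdef
      have hx0 : 0 ≤ x := norm_nonneg _
      have hy0 : 0 ≤ y := norm_nonneg _
      have hz0 : 0 ≤ z := norm_nonneg _
      have hyP0 : 0 ≤ ‖DMAux.toE (P * R)‖ := norm_nonneg _
      have hylt : y < δ / 6 := by
        nlinarith [hyP2, hcon, hy, hy0, hyP0, hδ0, mul_self_le_mul_self hy0 hy]
      set s := Real.sqrt δ with hsdef
      have hs2 : s ^ 2 = δ := Real.sq_sqrt hδ0.le
      have hs0 : 0 ≤ s := Real.sqrt_nonneg δ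
      have hs1 : s ≤ 1 := Real.sqrt_le_one.mpr hδ1.le
      have hδs : δ ≤ s := by nlinarith [hs2, hs0, hs1]
      have hsx : s < x := by nlinarith [hx2, hk', hs2, hx0, hs0]
      have hz56 : 5 / 6 * s ≤ z := by linarith
      rw [← hz2]
      nlinarith [hz56, hs2, hz0, hs0]
    have h1 : (G.card : ℝ) * (25 * δ / 36) ≤ ∑ k ∈ G, ((1 - P) * M k * (1 - P) * ρ).trace.re := by
      have := Finset.card_nsmul_le_sum G (fun k => ((1 - P) * M k * (1 - P) * ρ).trace.re)
        (25 * δ / 36) hak_large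
      simpa [nsmul_eq_mul] using this
    have h2 : ∑ k ∈ G, ((1 - P) * M k * (1 - P) * ρ).trace.re
        ≤ ∑ k, ((1 - P) * M k * (1 - P) * ρ).trace.re :=
      Finset.sum_le_sum_of_subset_of_nonneg (Finset.subset_univ G)
        (fun k _ _ => hak_nonneg k)
    have h3 : ∑ k, ((1 - P) * M k * (1 - P) * ρ).trace.re
        = ((1 - P) * S * (1 - P) * ρ).trace.re := by
      rw [hXsum, Matrix.trace_sum, Complex.re_sum]
    have hmG : (m : ℝ) ≤ (G.card : ℝ) := by exact_mod_cast hρcard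
    have hmδ : 0 < δ * (m : ℝ) := by positivity
    nlinarith [hθtrace]
end

section
/- Let (a_i, b_i) ∈ C² for i = 1,…,n be unit column vectors and let V = ⊗_{i=1}^n (a_i, b_i)^T ∈ C^{2^n} be their Kronecker product with entries v_1,…,v_{2^n}. Then for every k ≤ 2^{n-1}, |v_k|·|v_{2^n - k + 1}| = ∏_{i=1}^n |a_i|·|b_i|. -/
open Matrix

lemma testBit_two_pow_sub_one_sub (n : ℕ) : ∀ j i : ℕ, j < 2^n → i < n →
    Nat.testBit (2^n - 1 - j) i = !Nat.testBit j i := by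
  induction n with
  | zero => intro j i _ hi; omega
  | succ n ih =>
    intro j i hj hi
    have h2 : 2 ^ (n+1) = 2 * 2 ^ n := by ring
    cases i with
    | zero =>
      simp only [Nat.testBit_zero]
      rcases Nat.even_or_odd j with h | h <;> simp [Nat.even_iff, Nat.odd_iff] at h <;>
        simp [h] <;> omega
    | succ i =>
      rw [Nat.testBit_succ, Nat.testBit_succ]
      have hdiv : (2 ^ (n+1) - 1 - j) / 2 = 2 ^ n - 1 - j / 2 := by omega
      rw [hdiv]
      exact ih (j / 2) i (by omega) (by omega)

/-- Kronecker anti-diagonal pairing identity. With the convention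
`(a₁,b₁)ᵀ ⊗ (a₂,b₂)ᵀ = (a₁a₂, b₁a₂, a₁b₂, b₁b₂)ᵀ`, the entry with 1-based index `k`
of `V = ⊗ᵢ (aᵢ,bᵢ)ᵀ` is `V (k-1) = ∏ i, (if bit i of (k-1) then bᵢ else aᵢ)`.
For `1 ≤ k ≤ 2^(n-1)`, `|v_k| |v_{2^n-k+1}| = ∏ |aᵢ||bᵢ|`. -/
theorem kronecker_antidiagonal_pairing (n : ℕ) (a b : ℕ → ℂ)
    (hunit : ∀ i < n, ‖a i‖ ^ 2 + ‖b i‖ ^ 2 = 1)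
    (V : ℕ → ℂ)
    (hV : ∀ j, V j = ∏ i ∈ Finset.range n, (if Nat.testBit j i then b i else a i))
    (k : ℕ) (hk1 : 1 ≤ k) (hk : k ≤ 2^(n-1)) :
    ‖V (k-1)‖ * ‖V (2^n - k)‖ =
      ∏ i ∈ Finset.range n, ‖a i‖ * ‖b i‖ := by
  have hkn : k ≤ 2^n := le_trans hk (Nat.pow_le_pow_right (by norm_num) (Nat.sub_le n 1))
  rw [hV, hV, norm_prod, norm_prod, ← Finset.prod_mul_distrib]
  refine Finset.prod_congr rfl ?_
  intro i hi
  rw [Finset.mem_range] at hi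
  have heq : 2^n - k = 2^n - 1 - (k - 1) := by omega
  have hb : Nat.testBit (2^n - k) i = !Nat.testBit (k-1) i := by
    rw [heq]; exact testBit_two_pow_sub_one_sub n (k-1) i (by omega) hi
  rw [hb]
  cases Nat.testBit (k-1) i <;> simp [mul_comm]
end

section
/- Let d_n be the 2^n × 2^n symmetric real matrix with 2^{-n} along the main diagonal and 2^{-n} in the r_n = ⌊2^n/n⌋ extreme positions at each end of the anti-diagonal (i.e., d_n(i,j) = 2^{-n} if j = i, or if i ≤ r_n and j = 2^n - i + 1, or if j ≤ r_n and i = 2^n - j + 1; else 0). Then for n ≥ 5 and any W = ⊗_{i=1}^n w_i, a Kronecker product of n unit vectors in C², one has |⟨W, d_n W⟩| ∈ [2^{-n}(1 - 2/n), 2^{-n}(1 + 2/n)]. -/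
open Matrix Finset

set_option maxHeartbeats 1600000 in
private lemma fin2_sum_prod (n : ℕ) (F : ℕ → Bool → ℂ) :
    ∑ j : Fin (2^n), ∏ i ∈ Finset.range n, F i ((j:ℕ).testBit i)
    = ∏ i ∈ Finset.range n, (F i false + F i true) := by
  rw [← Equiv.sum_comp (finFunctionFinEquiv (m := 2) (n := n))
      (fun j : Fin (2^n) => ∏ i ∈ Finset.range n, F i ((j:ℕ).testBit i))]
  have key : ∀ (g : Fin n → Fin 2) (i : Fin n),
      ((finFunctionFinEquiv g : Fin (2^n)) : ℕ).testBit (i:ℕ) = decide (g i = 1) := by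
    intro g i
    have h2 : ((finFunctionFinEquiv.symm (finFunctionFinEquiv g) : Fin n → Fin 2) i : ℕ)
        = (g i : ℕ) := by rw [Equiv.symm_apply_apply]
    rw [finFunctionFinEquiv_symm_apply_val] at h2
    rw [Nat.testBit_eq_decide_div_mod_eq, h2]
    exact decide_eq_decide.mpr (by rw [Fin.ext_iff]; rfl)
  have step1 : ∀ g : Fin n → Fin 2,
      (fun j : Fin (2^n) => ∏ i ∈ Finset.range n, F i ((j:ℕ).testBit i)) (finFunctionFinEquiv g)
      = ∏ i : Fin n, F i (decide (g i = 1)) := by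
    intro g
    show ∏ i ∈ Finset.range n, F i (((finFunctionFinEquiv g : Fin (2^n)):ℕ).testBit i)
      = ∏ i : Fin n, F i (decide (g i = 1))
    rw [← Fin.prod_univ_eq_prod_range
      (fun i => F i (((finFunctionFinEquiv g : Fin (2^n)):ℕ).testBit i)) n]
    exact Finset.prod_congr rfl fun i _ => by rw [key g i]
  rw [Finset.sum_congr rfl fun g _ => step1 g]
  rw [← Fintype.prod_sum (fun (i : Fin n) (b : Fin 2) => F i (decide (b = 1)))]
  rw [← Fin.prod_univ_eq_prod_range (fun i => F i false + F i true) n]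
  exact Finset.prod_congr rfl fun i _ => by simp [Fin.sum_univ_two]

/-- for `n ≥ 5`, the matrix `d_n` (identity/2^n plus `⌊2^n/n⌋` extreme
anti-diagonal entries equal to `2^{-n}`) satisfies
`|⟨W, d_n W⟩| ∈ [2^{-n}(1-2/n), 2^{-n}(1+2/n)]` for every product tensor `W` of `n`
unit vectors in `ℂ²`. -/
theorem antidiagonal_matrix_product_vector_bound (n : ℕ) (hn : 5 ≤ n)
    (w : ℕ → Fin 2 → ℂ)
    (hunit : ∀ i < n, ‖w i 0‖ ^ 2 + ‖w i 1‖ ^ 2 = 1)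
    (W : Fin (2^n) → ℂ)
    (hW : ∀ j : Fin (2^n), W j =
      ∏ i ∈ Finset.range n, w i (if Nat.testBit (j : ℕ) i then 1 else 0))
    (d : Matrix (Fin (2^n)) (Fin (2^n)) ℂ)
    (hd : ∀ i j : Fin (2^n), d i j =
      if ((j : ℕ) = (i : ℕ)
          ∨ ((i : ℕ) < 2^n / n ∧ (j : ℕ) = 2^n - 1 - (i : ℕ))
          ∨ ((j : ℕ) < 2^n / n ∧ (i : ℕ) = 2^n - 1 - (j : ℕ)))
        then ((2 : ℂ)^n)⁻¹ else 0) :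
    ‖star W ⬝ᵥ (d *ᵥ W)‖ ∈
      Set.Icc (((2:ℝ)^n)⁻¹ * (1 - 2/(n:ℝ))) (((2:ℝ)^n)⁻¹ * (1 + 2/(n:ℝ))) := by
  have hNpos : 0 < 2^n := Nat.pow_pos (by norm_num)
  set r : ℕ := 2^n / n with hr
  have hrn : r * n ≤ 2^n := Nat.div_mul_le_self _ _
  have hr5 : r * 5 ≤ 2^n := le_trans (Nat.mul_le_mul_left r hn) hrn
  have h2r : 2 * r < 2^n := by omega
  set ρ : Fin (2^n) → Fin (2^n) := fun j => ⟨2^n - 1 - (j:ℕ), by omega⟩ with hρ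
  have hρv : ∀ j : Fin (2^n), (ρ j : ℕ) = 2^n - 1 - (j:ℕ) := fun j => rfl
  set c : ℂ := ((2:ℂ)^n)⁻¹ with hc
  set P : Fin (2^n) → Prop := fun i => (i:ℕ) < r ∨ (2^n - 1 - (i:ℕ)) < r with hPdef
  have hP : ∀ i, P i ↔ ((i:ℕ) < r ∨ (2^n - 1 - (i:ℕ)) < r) := fun i => Iff.rfl
  -- split the matrix entries into the diagonal part and the anti-diagonal part
  have hsplit : ∀ i j : Fin (2^n), d i j =
      (if j = i then c else 0) + (if P i ∧ j = ρ i then c else 0) := by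
    intro i j
    rw [hd i j]
    have hi2 := i.2
    have hj2 := j.2
    have hvj : (j = ρ i) ↔ (j:ℕ) = 2^n - 1 - (i:ℕ) := by
      rw [Fin.ext_iff, hρv i]
    have hji : (j = i) ↔ (j:ℕ) = (i:ℕ) := Fin.ext_iff
    have hPiff : P i ↔ ((i:ℕ) < r ∨ (2^n - 1 - (i:ℕ)) < r) := hP i
    by_cases hA : (j:ℕ) = (i:ℕ) <;>
      by_cases hB : ((i:ℕ) < r ∨ (2^n - 1 - (i:ℕ)) < r) ∧ (j:ℕ) = 2^n - 1 - (i:ℕ)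
    · exfalso; omega
    · rw [if_pos (Or.inl hA), if_pos (hji.mpr hA),
        if_neg (fun h => hB ⟨hPiff.mp h.1, hvj.mp h.2⟩), add_zero]
    · rw [if_pos, if_neg (fun h => hA (hji.mp h)), zero_add,
        if_pos ⟨hPiff.mpr hB.1, hvj.mpr hB.2⟩]
      omega
    · rw [if_neg, if_neg (fun h => hA (hji.mp h)),
        if_neg (fun h => hB ⟨hPiff.mp h.1, hvj.mp h.2⟩), add_zero]
      omega
  have hmul : ∀ i, (d *ᵥ W) i = c * W i + (if P i then c * W (ρ i) else 0) := by
    intro i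
    show ∑ j, d i j * W j = _
    simp only [hsplit, add_mul, ite_mul, zero_mul, Finset.sum_add_distrib]
    congr 1
    · simp [Finset.sum_ite_eq' Finset.univ i W]
    · by_cases hQ : P i
      · simp [hQ, Finset.sum_ite_eq' Finset.univ (ρ i) (fun j => c * W j)]
      · simp [hQ]
  have hT : star W ⬝ᵥ (d *ᵥ W) = c * ((∑ j, (starRingEnd ℂ) (W j) * W j)
      + ∑ i, (if P i then (starRingEnd ℂ) (W i) * W (ρ i) else 0)) := by
    show ∑ i, star (W i) * (d *ᵥ W) i = _
    simp only [Complex.star_def, hmul]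
    rw [mul_add, Finset.mul_sum, Finset.mul_sum, ← Finset.sum_add_distrib]
    refine Finset.sum_congr rfl fun i _ => ?_
    by_cases hQ : P i <;> simp [hQ] <;> ring
  -- the diagonal part sums to 1
  have hA1 : (∑ j : Fin (2^n), (starRingEnd ℂ) (W j) * W j) = 1 := by
    have key := fin2_sum_prod n
      (fun k b => (starRingEnd ℂ) (w k (if b then 1 else 0)) * w k (if b then 1 else 0))
    have step : ∀ j : Fin (2^n), (starRingEnd ℂ) (W j) * W j =
        ∏ i ∈ Finset.range n, ((starRingEnd ℂ) (w i (if (j:ℕ).testBit i then 1 else 0))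
          * w i (if (j:ℕ).testBit i then 1 else 0)) := by
      intro j
      rw [hW j, map_prod, Finset.prod_mul_distrib]
    rw [Finset.sum_congr rfl fun j _ => step j]
    rw [key]
    apply Finset.prod_eq_one
    intro i hi
    have h := hunit i (Finset.mem_range.mp hi)
    have e0 : ∀ z : ℂ, (starRingEnd ℂ) z * z = ((‖z‖ ^ 2 : ℝ) : ℂ) := by
      intro z
      rw [mul_comm, Complex.mul_conj, Complex.sq_norm]
    simp only [if_true, if_false, Bool.false_eq_true, e0]
    rw [← Complex.ofReal_add, h, Complex.ofReal_one]
  -- each anti-diagonal term is at most `2^{-n}` in absolute value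
  have hterm : ∀ i : Fin (2^n),
      ‖(starRingEnd ℂ) (W i) * W (ρ i)‖ ≤ ((2:ℝ)^n)⁻¹ := by
    intro i
    rw [norm_mul, Complex.norm_conj, hW i, hW (ρ i), norm_prod, norm_prod,
      ← Finset.prod_mul_distrib]
    have hconst : ((2:ℝ)^n)⁻¹ = ∏ _k ∈ Finset.range n, (2:ℝ)⁻¹ := by
      rw [Finset.prod_const, Finset.card_range, inv_pow]
    rw [hconst]
    apply Finset.prod_le_prod
    · intro k _
      positivity
    · intro k hk
      have hk' := Finset.mem_range.mp hk
      have hflip : ((ρ i : Fin (2^n)):ℕ).testBit k = !((i:ℕ).testBit k) := by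
        rw [hρv i]
        have h1 : 2^n - 1 - (i:ℕ) = 2^n - ((i:ℕ)+1) := by omega
        rw [h1, Nat.testBit_two_pow_sub_succ i.2]
        simp [hk']
      rw [hflip]
      have h := hunit k hk'
      have hx := norm_nonneg (w k 0)
      have hy := norm_nonneg (w k 1)
      have hxy : ‖w k 0‖ * ‖w k 1‖ ≤ 2⁻¹ := by
        nlinarith [sq_nonneg (‖w k 0‖ - ‖w k 1‖)]
      cases hb : (i:ℕ).testBit k <;> simp only [Bool.not_false, Bool.not_true,
        if_true, if_false, Bool.false_eq_true] <;> nlinarith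
  set B : ℂ := ∑ i, (if P i then (starRingEnd ℂ) (W i) * W (ρ i) else 0) with hB
  -- the anti-diagonal part is at most `2/n` in absolute value
  have hBabs : ‖B‖ ≤ 2 / n := by
    have hcard : (Finset.univ.filter P).card ≤ 2 * r := by
      have heq : Finset.univ.filter P =
          (Finset.univ.filter (fun i : Fin (2^n) => (i:ℕ) < r)) ∪
          (Finset.univ.filter (fun i : Fin (2^n) => (2^n - 1 - (i:ℕ)) < r)) := by
        rw [← Finset.filter_or]
      have h1 : (Finset.univ.filter (fun i : Fin (2^n) => (i:ℕ) < r)).card ≤ r := by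
        have h0 : (Finset.univ.filter (fun i : Fin (2^n) => (i:ℕ) < r)).card
            ≤ (Finset.range r).card :=
          Finset.card_le_card_of_injOn (fun i : Fin (2^n) => (i:ℕ))
            (fun x hx => Finset.mem_range.mpr (Finset.mem_filter.mp hx).2)
            (fun a _ b _ h => Fin.val_injective h)
        simpa using h0
      have h2 : (Finset.univ.filter (fun i : Fin (2^n) => (2^n - 1 - (i:ℕ)) < r)).card ≤ r := by
        have h0 : (Finset.univ.filter (fun i : Fin (2^n) => (2^n - 1 - (i:ℕ)) < r)).card
            ≤ (Finset.range r).card :=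
          Finset.card_le_card_of_injOn (fun i : Fin (2^n) => 2^n - 1 - (i:ℕ))
            (fun x hx => Finset.mem_range.mpr (Finset.mem_filter.mp hx).2)
            (fun a _ b _ h => by
              have h2a := a.2
              have h2b := b.2
              exact Fin.ext (by simp only at h; omega))
        simpa using h0
      calc (Finset.univ.filter P).card
          ≤ _ + _ := heq ▸ Finset.card_union_le _ _
        _ ≤ 2 * r := by omega
    rw [hB, ← Finset.sum_filter]
    calc ‖∑ i ∈ Finset.univ.filter P, (starRingEnd ℂ) (W i) * W (ρ i)‖
        ≤ ∑ i ∈ Finset.univ.filter P, ‖(starRingEnd ℂ) (W i) * W (ρ i)‖ :=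
          norm_sum_le _ _
      _ ≤ ∑ _i ∈ Finset.univ.filter P, ((2:ℝ)^n)⁻¹ := Finset.sum_le_sum fun i _ => hterm i
      _ = (Finset.univ.filter P).card * ((2:ℝ)^n)⁻¹ := by rw [Finset.sum_const, nsmul_eq_mul]
      _ ≤ (2*r : ℝ) * ((2:ℝ)^n)⁻¹ := by
          have : ((Finset.univ.filter P).card : ℝ) ≤ (2*r:ℝ) := by exact_mod_cast hcard
          exact mul_le_mul_of_nonneg_right this (by positivity)
      _ ≤ 2 / n := by
          rw [mul_inv_le_iff₀ (by positivity), div_mul_eq_mul_div,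
            le_div_iff₀ (by positivity)]
          have h1 : (r:ℝ) * n ≤ (2:ℝ)^n := by exact_mod_cast hrn
          nlinarith
  rw [hT, hA1, norm_mul]
  have hcabs : ‖c‖ = ((2:ℝ)^n)⁻¹ := by
    rw [hc, norm_inv, norm_pow, Complex.norm_two]
  rw [hcabs]
  have hnpos : (0:ℝ) < n := by positivity
  have hup : ‖1 + B‖ ≤ 1 + 2/n := by
    calc ‖1 + B‖ ≤ ‖(1:ℂ)‖ + ‖B‖ := norm_add_le _ _
    _ ≤ 1 + 2/n := by rw [norm_one]; linarith
  have hlo : 1 - 2/n ≤ ‖1 + B‖ := by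
    have h1 : ‖(1+B) + (-B)‖ ≤ ‖1+B‖ + ‖-B‖ :=
      norm_add_le _ _
    simp only [add_neg_cancel_right, norm_one, norm_neg] at h1
    linarith
  have hinv : (0:ℝ) ≤ ((2:ℝ)^n)⁻¹ := by positivity
  exact ⟨mul_le_mul_of_nonneg_left hlo hinv, mul_le_mul_of_nonneg_left hup hinv⟩
end

section
/- Let E be a 2^n × 2^n complex matrix. If v† E v = 0 for all vectors v ∈ C^{2^n} that are Kronecker products of n unit vectors in C² with complex algebraic entries (atomic vectors), then E is the zero matrix. -/
open Matrix

/-- An atomic vector in `ℂ^(2^n)`: a Kronecker product of `n` unit vectors in `ℂ²`,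
with the convention that bit `i` of the index selects the component of the `i`-th factor. -/
def AtomicVec (n : ℕ) (v : Fin (2^n) → ℂ) : Prop :=
  ∃ w : ℕ → Fin 2 → ℂ,
    (∀ i < n, ‖w i 0‖ ^ 2 + ‖w i 1‖ ^ 2 = 1) ∧
    v = fun j : Fin (2^n) =>
      ∏ i ∈ Finset.range n, w i (if Nat.testBit (j : ℕ) i then 1 else 0)

/-- A general product vector (not necessarily normalized). -/
def PVec (n : ℕ) (w : ℕ → Fin 2 → ℂ) : Fin (2^n) → ℂ :=
  fun j => ∏ i ∈ Finset.range n, w i (if Nat.testBit (j : ℕ) i then 1 else 0)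

/-- A complex matrix whose quadratic form vanishes identically is zero. -/
lemma quad_zero {m : Type*} [Fintype m] [DecidableEq m] (M : Matrix m m ℂ)
    (h : ∀ x : m → ℂ, star x ⬝ᵥ (M *ᵥ x) = 0) : M = 0 := by
  have key : ∀ x y : m → ℂ, star x ⬝ᵥ (M *ᵥ y) + star y ⬝ᵥ (M *ᵥ x) = 0 := by
    intro x y
    have h1 := h (x + y)
    have h2 := h x
    have h3 := h y
    simp only [star_add, add_dotProduct, mulVec_add, dotProduct_add] at h1
    rw [h2] at h1
    rw [h3] at h1
    linear_combination h1
  have key2 : ∀ x y : m → ℂ, star x ⬝ᵥ (M *ᵥ y) = 0 := by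
    intro x y
    have h1 := key x y
    have h2 := key x (Complex.I • y)
    simp only [star_smul, smul_dotProduct, mulVec_smul, dotProduct_smul, smul_eq_mul,
      RCLike.star_def, Complex.conj_I] at h2
    have hI : Complex.I ≠ 0 := Complex.I_ne_zero
    have h3 : Complex.I * (star x ⬝ᵥ (M *ᵥ y)) - Complex.I * (star y ⬝ᵥ (M *ᵥ x)) = 0 := by
      linear_combination h2
    have h4 : star x ⬝ᵥ (M *ᵥ y) - star y ⬝ᵥ (M *ᵥ x) = 0 := by
      apply mul_left_cancel₀ hI
      rw [mul_zero]
      linear_combination h3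
    linear_combination (h1 + h4) / 2
  ext a b
  have := key2 (Pi.single a 1) (Pi.single b 1)
  simpa [dotProduct, mulVec, Pi.single_apply, Finset.mul_sum, apply_ite] using this

def splitEquiv (n : ℕ) : Fin 2 × Fin (2^n) ≃ Fin (2^(n+1)) where
  toFun p := ⟨p.1.val + 2 * p.2.val, by
    have h1 := p.1.isLt; have h2 := p.2.isLt
    rw [pow_succ]; omega⟩
  invFun j := (⟨j.val % 2, by omega⟩, ⟨j.val / 2, by
    have := j.isLt; have h2 : (2:ℕ)^(n+1) = 2^n*2 := pow_succ 2 n; omega⟩)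
  left_inv p := by
    have h1 := p.1.isLt
    ext <;> simp <;> omega
  right_inv j := by
    ext; simp; omega

lemma pvec_split (n : ℕ) (w : ℕ → Fin 2 → ℂ) (p : Fin 2 × Fin (2^n)) :
    PVec (n+1) w (splitEquiv n p) = w 0 p.1 * PVec n (fun i => w (i+1)) p.2 := by
  obtain ⟨a, j⟩ := p
  have hval : ((splitEquiv n (a, j) : Fin (2^(n+1))) : ℕ) = a.val + 2 * j.val := rfl
  unfold PVec
  rw [Finset.prod_range_succ', hval, mul_comm]
  congr 1
  · congr 1
    have : (a.val + 2 * j.val) % 2 = a.val := by omega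
    rw [Nat.testBit_zero, this]
    fin_cases a <;> simp
  · apply Finset.prod_congr rfl
    intro i _
    have hd : (a.val + 2 * j.val) / 2 = j.val := by have := a.isLt; omega
    congr 2
    rw [Nat.testBit_succ, hd]

lemma quadform_split (n : ℕ) (E : Matrix (Fin (2^(n+1))) (Fin (2^(n+1))) ℂ)
    (v : Fin (2^(n+1)) → ℂ) (x : Fin 2 → ℂ) (u : Fin (2^n) → ℂ)
    (hsplit : ∀ p : Fin 2 × Fin (2^n), v (splitEquiv n p) = x p.1 * u p.2) :
    star v ⬝ᵥ (E *ᵥ v)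
      = star x ⬝ᵥ
        ((Matrix.of fun a b => star u ⬝ᵥ
            ((Matrix.of fun j k => E (splitEquiv n (a,j)) (splitEquiv n (b,k))) *ᵥ u))
          *ᵥ x) := by
  set e := splitEquiv n with he
  have canon : star v ⬝ᵥ (E *ᵥ v)
      = ∑ a : Fin 2, ∑ b : Fin 2, ∑ j : Fin (2^n), ∑ k : Fin (2^n),
          star (x a) * (x b) * (star (u j) * (E (e (a,j)) (e (b,k)) * u k)) := by
    have h1 : star v ⬝ᵥ (E *ᵥ v)
        = ∑ p : Fin 2 × Fin (2^n), ∑ q : Fin 2 × Fin (2^n),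
            star (v (e p)) * (E (e p) (e q) * v (e q)) := by
      simp only [dotProduct, mulVec, Pi.star_apply, Finset.mul_sum]
      refine (Fintype.sum_equiv e
        (fun p => ∑ q : Fin 2 × Fin (2^n), star (v (e p)) * (E (e p) (e q) * v (e q)))
        (fun j => ∑ k, star (v j) * (E j k * v k)) fun p => ?_).symm
      exact (Fintype.sum_equiv e
        (fun q => star (v (e p)) * (E (e p) (e q) * v (e q)))
        (fun k => star (v (e p)) * (E (e p) k * v k)) fun q => rfl)
    rw [h1, Fintype.sum_prod_type]
    refine Finset.sum_congr rfl fun a _ => ?_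
    have h2 : ∀ j : Fin (2^n),
        (∑ q : Fin 2 × Fin (2^n), star (v (e (a,j))) * (E (e (a,j)) (e q) * v (e q)))
        = ∑ b : Fin 2, ∑ k : Fin (2^n),
            star (x a) * (x b) * (star (u j) * (E (e (a,j)) (e (b,k)) * u k)) := by
      intro j
      rw [Fintype.sum_prod_type]
      refine Finset.sum_congr rfl fun b _ => Finset.sum_congr rfl fun k _ => ?_
      rw [hsplit (a,j), hsplit (b,k)]
      simp only [star_mul']
      ring
    rw [Finset.sum_congr rfl fun j _ => h2 j, Finset.sum_comm]
  rw [canon]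
  simp only [dotProduct, mulVec, Pi.star_apply, Matrix.of_apply, Finset.mul_sum,
    Finset.sum_mul]
  refine Finset.sum_congr rfl fun a _ => Finset.sum_congr rfl fun b _ =>
    Finset.sum_congr rfl fun j _ => Finset.sum_congr rfl fun k _ => by ring

lemma key_induction : ∀ (n : ℕ) (E : Matrix (Fin (2^n)) (Fin (2^n)) ℂ),
    (∀ w : ℕ → Fin 2 → ℂ, star (PVec n w) ⬝ᵥ (E *ᵥ PVec n w) = 0) → E = 0 := by
  intro n
  induction n with
  | zero =>
    intro E h
    haveI : Unique (Fin (2^0)) := ⟨⟨⟨0, by norm_num⟩⟩, fun j => by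
      ext
      have := j.isLt
      norm_num at this
      simp [this]⟩
    have h0 := h (fun _ _ => 1)
    simp [PVec, dotProduct, mulVec] at h0
    ext j k
    have hj := Subsingleton.elim j (default : Fin (2^0))
    have hk := Subsingleton.elim k (default : Fin (2^0))
    rw [hj, hk]
    show E default default = 0
    convert h0 using 2 <;> exact Subsingleton.elim _ _
  | succ n ih =>
    intro E h
    have hblock : ∀ a b : Fin 2,
        (Matrix.of fun j k => E (splitEquiv n (a,j)) (splitEquiv n (b,k))) = 0 := by
      intro a b
      apply ih
      intro w'
      have hM : (Matrix.of fun a b : Fin 2 => star (PVec n w') ⬝ᵥ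
          ((Matrix.of fun j k => E (splitEquiv n (a,j)) (splitEquiv n (b,k)))
            *ᵥ PVec n w')) = 0 := by
        apply quad_zero
        intro x
        set W : ℕ → Fin 2 → ℂ := fun i => if i = 0 then x else w' (i-1) with hW
        have hx : W 0 = x := rfl
        have hw' : (fun i => W (i+1)) = w' := by funext i; simp [hW]
        have hs := quadform_split n E (PVec (n+1) W) (W 0)
          (PVec n (fun i => W (i+1))) (pvec_split n W)
        rw [h W, hx, hw'] at hs
        exact hs.symm
      have := congrFun (congrFun hM a) b
      simpa using this
    ext j k
    have h1 := congrFun (congrFun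
      (hblock ((splitEquiv n).symm j).1 ((splitEquiv n).symm k).1)
      ((splitEquiv n).symm j).2) ((splitEquiv n).symm k).2
    simpa [Prod.mk.eta, Equiv.apply_symm_apply] using h1

/-- if `v† E v = 0` for all atomic vectors `v`, then `E = 0`. -/
theorem eq_zero_of_atomic_quadratic_form_eq_zero (n : ℕ)
    (E : Matrix (Fin (2^n)) (Fin (2^n)) ℂ)
    (h : ∀ v : Fin (2^n) → ℂ, AtomicVec n v → star v ⬝ᵥ (E *ᵥ v) = 0) :
    E = 0 := by
  apply key_induction n E
  intro w
  -- normalize each factor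
  set c : ℕ → ℝ := fun i =>
    Real.sqrt (‖w i 0‖ ^ 2 + ‖w i 1‖ ^ 2) with hc
  set w' : ℕ → Fin 2 → ℂ := fun i =>
    if c i = 0 then ![1, 0] else ((c i : ℂ)⁻¹ • w i) with hw'
  have hnonneg : ∀ i, 0 ≤ ‖w i 0‖ ^ 2 + ‖w i 1‖ ^ 2 := by
    intro i; positivity
  have hsq : ∀ i, (c i) ^ 2 = ‖w i 0‖ ^ 2 + ‖w i 1‖ ^ 2 := by
    intro i; exact Real.sq_sqrt (hnonneg i)
  have hunit : ∀ i, ‖w' i 0‖ ^ 2 + ‖w' i 1‖ ^ 2 = 1 := by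
    intro i
    by_cases h0 : c i = 0
    · simp [hw', h0]
    · have hc0 : (0:ℝ) ≤ c i := Real.sqrt_nonneg _
      have hcpos : 0 < c i := lt_of_le_of_ne hc0 (Ne.symm h0)
      simp only [hw', if_neg h0, Pi.smul_apply, smul_eq_mul, norm_mul, mul_pow]
      have habs : ‖(c i : ℂ)⁻¹‖ = (c i)⁻¹ := by
        rw [norm_inv, Complex.norm_real, Real.norm_of_nonneg hc0]
      rw [habs]
      field_simp
      linarith [hsq i]
  have hfac : ∀ i b, w i b = (c i : ℂ) * w' i b := by
    intro i b
    by_cases h0 : c i = 0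
    · have hz : ‖w i 0‖ ^ 2 + ‖w i 1‖ ^ 2 = 0 := by
        have := hsq i
        rw [h0] at this
        simpa using this.symm
      have h00 : w i 0 = 0 := by
        have h2 : ‖w i 0‖ ^ 2 = 0 := by
          nlinarith [sq_nonneg (‖w i 1‖)]
        have h3 := pow_eq_zero_iff (two_ne_zero) |>.mp h2
        simpa using h3
      have h01 : w i 1 = 0 := by
        have h2 : ‖w i 1‖ ^ 2 = 0 := by
          nlinarith [sq_nonneg (‖w i 0‖)]
        have h3 := pow_eq_zero_iff (two_ne_zero) |>.mp h2
        simpa using h3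
      have hb : w i b = 0 := by
        fin_cases b
        · exact h00
        · exact h01
      simp [hb, h0]
    · have hcc : (c i : ℂ) ≠ 0 := by exact_mod_cast h0
      simp only [hw', if_neg h0, Pi.smul_apply, smul_eq_mul]
      field_simp
  have hscale : PVec n w = (∏ i ∈ Finset.range n, (c i : ℂ)) • PVec n w' := by
    funext j
    simp only [PVec, Pi.smul_apply, smul_eq_mul, ← Finset.prod_mul_distrib]
    exact Finset.prod_congr rfl fun i _ => hfac i _
  have hatomic : AtomicVec n (PVec n w') := ⟨w', fun i _ => hunit i, rfl⟩
  rw [hscale]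
  simp only [star_smul, smul_dotProduct, mulVec_smul, dotProduct_smul, smul_eq_mul]
  rw [h (PVec n w') hatomic]
  ring
end

section
/- Let E be a 2^n × 2^n Hermitian matrix such that v† E v = 2^{-n} for every atomic vector v ∈ C^{2^n} (a Kronecker product of n unit vectors in C²). Then E = 2^{-n}·I, where I is the 2^n × 2^n identity. -/
open Matrix

/-- The pairing equivalence `Fin 2 × Fin (2^n) ≃ Fin (2^(n+1))`, `(b, j) ↦ b + 2*j`. -/
def pairEquiv (n : ℕ) : Fin 2 × Fin (2^n) ≃ Fin (2^(n+1)) where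
  toFun p := ⟨p.1.1 + 2 * p.2.1, by
    have h1 := p.1.2; have h2 := p.2.2
    have h3 : (2:ℕ)^(n+1) = 2 * 2^n := by ring
    omega⟩
  invFun j := (⟨j.1 % 2, by omega⟩, ⟨j.1 / 2, by
    have h1 := j.2
    have h3 : (2:ℕ)^(n+1) = 2 * 2^n := by ring
    omega⟩)
  left_inv p := by
    obtain ⟨⟨b, hb⟩, ⟨j, hj⟩⟩ := p
    simp only [Prod.mk.injEq, Fin.mk.injEq]
    omega
  right_inv j := by
    obtain ⟨j, hj⟩ := j
    simp only [Fin.mk.injEq]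
    omega

lemma pairEquiv_coe (n : ℕ) (b : Fin 2) (j : Fin (2^n)) :
    ((pairEquiv n (b, j) : Fin (2^(n+1))) : ℕ) = b.1 + 2 * j.1 := rfl

/-- Key product decomposition of the atomic product over bits. -/
lemma prod_bits_succ (n : ℕ) (f : ℕ → Fin 2 → ℂ) (b : Fin 2) (j : Fin (2^n)) :
    (∏ i ∈ Finset.range (n+1),
        f i (if Nat.testBit (((pairEquiv n (b, j)) : Fin (2^(n+1))) : ℕ) i then 1 else 0))
      = f 0 b *
        ∏ i ∈ Finset.range n, f (i+1) (if Nat.testBit (j : ℕ) i then 1 else 0) := by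
  rw [Finset.prod_range_succ']
  have hdiv : (b.1 + 2 * j.1) / 2 = j.1 := by omega
  have hb : ∀ i, Nat.testBit (b.1 + 2 * j.1) (i+1) = Nat.testBit j.1 i := by
    intro i; rw [Nat.testBit_succ, hdiv]
  rw [mul_comm]
  congr 1
  · rw [pairEquiv_coe, Nat.testBit_zero]
    fin_cases b <;> simp
  · refine Finset.prod_congr rfl fun i _ => ?_
    rw [pairEquiv_coe, hb]

/-- `∑_j ∏_i f i (bit i j) = ∏_i (f i 0 + f i 1)`. -/
lemma sum_prod_bits : ∀ (n : ℕ) (f : ℕ → Fin 2 → ℂ),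
    (∑ j : Fin (2^n), ∏ i ∈ Finset.range n,
        f i (if Nat.testBit ((j : Fin (2^n)) : ℕ) i then 1 else 0))
      = ∏ i ∈ Finset.range n, (f i 0 + f i 1) := by
  intro n
  induction n with
  | zero =>
    intro f
    simp only [pow_zero, Finset.range_zero, Finset.prod_empty]
    simp
  | succ n ih =>
    intro f
    rw [← Equiv.sum_comp (pairEquiv n)
      (fun j : Fin (2^(n+1)) => ∏ i ∈ Finset.range (n+1),
        f i (if Nat.testBit ((j : Fin (2^(n+1))) : ℕ) i then 1 else 0))]
    rw [Fintype.sum_prod_type]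
    have hterm : ∀ (b : Fin 2) (j : Fin (2^n)),
        (∏ i ∈ Finset.range (n+1),
          f i (if Nat.testBit (((pairEquiv n (b, j)) : Fin (2^(n+1))) : ℕ) i then 1 else 0))
        = f 0 b * ∏ i ∈ Finset.range n, f (i+1) (if Nat.testBit ((j : Fin (2^n)) : ℕ) i then 1 else 0) :=
      fun b j => prod_bits_succ n f b j
    simp only [hterm]
    rw [Fin.sum_univ_two, ← Finset.mul_sum, ← Finset.mul_sum, ← add_mul,
      ih (fun i => f (i+1)), Finset.prod_range_succ']
    ring

/-- Atomic vectors have unit norm. -/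
lemma atomic_norm (n : ℕ) (v : Fin (2^n) → ℂ) (hv : AtomicVec n v) :
    star v ⬝ᵥ v = 1 := by
  obtain ⟨w, hw, rfl⟩ := hv
  have hterm : ∀ j : Fin (2^n),
      (starRingEnd ℂ) (∏ i ∈ Finset.range n, w i (if Nat.testBit (j : ℕ) i then 1 else 0)) *
        (∏ i ∈ Finset.range n, w i (if Nat.testBit (j : ℕ) i then 1 else 0))
      = ∏ i ∈ Finset.range n,
          (fun i (b : Fin 2) => ((Complex.normSq (w i b) : ℝ) : ℂ)) i
            (if Nat.testBit (j : ℕ) i then 1 else 0) := by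
    intro j
    rw [map_prod, ← Finset.prod_mul_distrib]
    refine Finset.prod_congr rfl fun i _ => ?_
    rw [mul_comm, Complex.mul_conj]
  simp only [dotProduct, Pi.star_apply, RCLike.star_def]
  rw [Finset.sum_congr rfl fun j _ => hterm j,
    sum_prod_bits n (fun i b => ((Complex.normSq (w i b) : ℝ) : ℂ))]
  have h1 : ∀ i ∈ Finset.range n,
      ((Complex.normSq (w i 0) : ℝ) : ℂ) + ((Complex.normSq (w i 1) : ℝ) : ℂ) = 1 := by
    intro i hi
    rw [Finset.mem_range] at hi
    have h2 := hw i hi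
    rw [← Complex.ofReal_add, Complex.normSq_eq_norm_sq, Complex.normSq_eq_norm_sq, h2]
    norm_num
  rw [Finset.prod_congr rfl h1, Finset.prod_const_one]

/-- A matrix whose quadratic form vanishes on all atomic vectors is zero. -/
lemma zero_of_atomic_form_zero : ∀ (n : ℕ) (B : Matrix (Fin (2^n)) (Fin (2^n)) ℂ),
    (∀ v, AtomicVec n v → star v ⬝ᵥ (B *ᵥ v) = 0) → B = 0 := by
  intro n
  induction n with
  | zero =>
    intro B hQ
    haveI hsub : Subsingleton (Fin (2^0)) := by rw [pow_zero]; infer_instance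
    have hv : AtomicVec 0 (fun _ => 1) :=
      ⟨fun _ _ => 1, fun i hi => absurd hi (by omega), by simp⟩
    have h0 := hQ _ hv
    ext j k
    have hj : j = 0 := Subsingleton.elim _ _
    have hk : k = 0 := Subsingleton.elim _ _
    subst hj; subst hk
    simpa [dotProduct, mulVec] using h0
  | succ n ih =>
    intro B hQ
    set e := pairEquiv n with he
    set B' : Fin 2 → Fin 2 → Matrix (Fin (2^n)) (Fin (2^n)) ℂ :=
      fun b c => Matrix.of fun j k => B (e (b, j)) (e (c, k)) with hB'def
    have key : ∀ (w0 : Fin 2 → ℂ),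
        ‖w0 0‖ ^ 2 + ‖w0 1‖ ^ 2 = 1 →
        ∀ v, AtomicVec n v →
        (∑ b : Fin 2, ∑ c : Fin 2,
          (starRingEnd ℂ) (w0 b) * w0 c * (star v ⬝ᵥ (B' b c *ᵥ v))) = 0 := by
      intro w0 hw0 v hv
      obtain ⟨w, hw, hvv⟩ := hv
      set W : ℕ → Fin 2 → ℂ := fun i => match i with
        | 0 => w0
        | (i+1) => w i with hW
      set V : Fin (2^(n+1)) → ℂ := fun j =>
        ∏ i ∈ Finset.range (n+1), W i (if Nat.testBit (j : ℕ) i then 1 else 0) with hV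
      have hVatomic : AtomicVec (n+1) V := by
        refine ⟨W, ?_, hV⟩
        intro i hi
        match i with
        | 0 => exact hw0
        | (i+1) => exact hw i (by omega)
      have hval : ∀ (b : Fin 2) (j : Fin (2^n)), V (e (b, j)) = w0 b * v j := by
        intro b j
        rw [hvv]
        exact prod_bits_succ n W b j
      have hQV := hQ V hVatomic
      set T : (Fin 2 × Fin (2^n)) → (Fin 2 × Fin (2^n)) → ℂ := fun p q =>
        (starRingEnd ℂ) (w0 p.1) * (starRingEnd ℂ) (v p.2) * B' p.1 q.1 p.2 q.2
          * w0 q.1 * v q.2 with hT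
      have hdot : ∀ b c : Fin 2, star v ⬝ᵥ (B' b c *ᵥ v)
          = ∑ j, ∑ k, (starRingEnd ℂ) (v j) * (B' b c j k * v k) := by
        intro b c
        simp [dotProduct, mulVec, Finset.mul_sum]
      have hL : star V ⬝ᵥ (B *ᵥ V) = ∑ p : Fin 2 × Fin (2^n), ∑ q, T p q := by
        have h1 : star V ⬝ᵥ (B *ᵥ V)
            = ∑ j, ∑ k, (starRingEnd ℂ) (V j) * (B j k * V k) := by
          simp [dotProduct, mulVec, Finset.mul_sum]
        rw [h1, ← Equiv.sum_comp e (fun j => ∑ k, (starRingEnd ℂ) (V j) * (B j k * V k))]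
        refine Finset.sum_congr rfl fun p _ => ?_
        rw [← Equiv.sum_comp e (fun k => (starRingEnd ℂ) (V (e p)) * (B (e p) k * V k))]
        refine Finset.sum_congr rfl fun q _ => ?_
        obtain ⟨b, j⟩ := p
        obtain ⟨c, k⟩ := q
        rw [hval, hval]
        simp only [hT, _root_.map_mul, hB'def, Matrix.of_apply]
        ring
      have hR : (∑ b : Fin 2, ∑ c : Fin 2,
            (starRingEnd ℂ) (w0 b) * w0 c * (star v ⬝ᵥ (B' b c *ᵥ v)))
          = ∑ p : Fin 2 × Fin (2^n), ∑ q, T p q := by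
        have h2 : ∀ p : Fin 2 × Fin (2^n), (∑ q : Fin 2 × Fin (2^n), T p q)
            = ∑ c : Fin 2, ∑ k, T p (c, k) :=
          fun p => Fintype.sum_prod_type _
        calc (∑ b : Fin 2, ∑ c : Fin 2,
              (starRingEnd ℂ) (w0 b) * w0 c * (star v ⬝ᵥ (B' b c *ᵥ v)))
            = ∑ b : Fin 2, ∑ c : Fin 2, ∑ j, ∑ k, T (b, j) (c, k) := by
              refine Finset.sum_congr rfl fun b _ => Finset.sum_congr rfl fun c _ => ?_
              rw [hdot b c, Finset.mul_sum]
              refine Finset.sum_congr rfl fun j _ => ?_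
              rw [Finset.mul_sum]
              refine Finset.sum_congr rfl fun k _ => ?_
              simp only [hT]
              ring
          _ = ∑ b : Fin 2, ∑ j, ∑ c : Fin 2, ∑ k, T (b, j) (c, k) := by
              exact Finset.sum_congr rfl fun b _ => Finset.sum_comm
          _ = ∑ p : Fin 2 × Fin (2^n), ∑ q, T p q := by
              rw [Fintype.sum_prod_type]
              exact Finset.sum_congr rfl fun b _ =>
                Finset.sum_congr rfl fun j _ => (h2 (b, j)).symm
      rw [hR, ← hL]
      exact hQV
    -- now instantiate the four unit vectors
    have hzero : ∀ v, AtomicVec n v → ∀ b c : Fin 2, star v ⬝ᵥ (B' b c *ᵥ v) = 0 := by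
      intro v hv
      set r : ℝ := (Real.sqrt 2)⁻¹ with hr
      have hrnn : 0 ≤ r := by positivity
      have hrr : r * r = 1/2 := by
        rw [hr, ← mul_inv, Real.mul_self_sqrt (by norm_num)]
        norm_num
      have habs : ‖((r : ℝ) : ℂ)‖ = r := by
        rw [Complex.norm_real, Real.norm_of_nonneg hrnn]
      have hcc : ((r : ℝ) : ℂ) * ((r : ℝ) : ℂ) = 1/2 := by
        rw [← Complex.ofReal_mul, hrr]
        norm_num
      have h1 := key ![1, 0] (by
        simp [Matrix.cons_val_zero, Matrix.cons_val_one, Matrix.head_cons]) v hv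
      have h2 := key ![0, 1] (by
        simp [Matrix.cons_val_zero, Matrix.cons_val_one, Matrix.head_cons]) v hv
      have h3 := key ![((r : ℝ) : ℂ), ((r : ℝ) : ℂ)] (by
        simp only [Matrix.cons_val_zero, Matrix.cons_val_one, Matrix.head_cons, habs]
        rw [pow_two, hrr]; norm_num) v hv
      have h4 := key ![((r : ℝ) : ℂ), ((r : ℝ) : ℂ) * Complex.I] (by
        simp only [Matrix.cons_val_zero, Matrix.cons_val_one, Matrix.head_cons, _root_.map_mul, norm_mul,
          Complex.norm_I, habs, mul_one]
        rw [pow_two, hrr]; norm_num) v hv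
      simp only [Fin.sum_univ_two, Matrix.cons_val_zero, Matrix.cons_val_one,
        Matrix.head_cons, one_mul, mul_one, zero_mul, mul_zero,
        add_zero, zero_add, _root_.map_mul, _root_.map_one, _root_.map_zero,
        Complex.conj_ofReal, Complex.conj_I] at h1 h2 h3 h4
      set t : ℂ := ((r : ℝ) : ℂ) with htdef
      set q00 := star v ⬝ᵥ (B' 0 0 *ᵥ v) with hq00def
      set q01 := star v ⬝ᵥ (B' 0 1 *ᵥ v) with hq01def
      set q10 := star v ⬝ᵥ (B' 1 0 *ᵥ v) with hq10def
      set q11 := star v ⬝ᵥ (B' 1 1 *ᵥ v) with hq11def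
      have hI : Complex.I * Complex.I = -1 := Complex.I_mul_I
      have e3 : q01 + q10 = 0 := by
        linear_combination 2*h3 - h1 - h2 - 2*(q00+q01+q10+q11)*hcc
      have e4 : q01 - q10 = 0 := by
        linear_combination (-2*Complex.I)*h4 + (2*Complex.I*(t*t))*h1 + (2*Complex.I*(t*t))*h2
          - 2*(q01-q10)*hcc + (2*(t*t)*q01 - 2*(t*t)*q10 - 2*Complex.I*(t*t)*q11)*hI
      intro b c
      fin_cases b <;> fin_cases c
      · exact h1
      · show q01 = 0
        linear_combination e3/2 + e4/2
      · show q10 = 0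
        linear_combination e3/2 - e4/2
      · exact h2
    have hB' : ∀ b c : Fin 2, B' b c = 0 :=
      fun b c => ih _ (fun v hv => hzero v hv b c)
    ext j k
    obtain ⟨p, rfl⟩ : ∃ p, j = e p := ⟨e.symm j, (e.apply_symm_apply j).symm⟩
    obtain ⟨q, rfl⟩ : ∃ q, k = e q := ⟨e.symm k, (e.apply_symm_apply k).symm⟩
    have hfin := congrFun (congrFun (hB' p.1 q.1) p.2) q.2
    simpa [hB'def] using hfin

/-- a Hermitian matrix `E` with `v† E v = 2^{-n}` for every atomic vector
`v` equals `2^{-n} I`. -/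
theorem eq_smul_id_of_atomic_quadratic_form_const (n : ℕ)
    (E : Matrix (Fin (2^n)) (Fin (2^n)) ℂ) (hherm : E.IsHermitian)
    (h : ∀ v : Fin (2^n) → ℂ, AtomicVec n v → star v ⬝ᵥ (E *ᵥ v) = ((2:ℂ)^n)⁻¹) :
    E = ((2:ℂ)^n)⁻¹ • (1 : Matrix (Fin (2^n)) (Fin (2^n)) ℂ) := by
  have hz : E - ((2:ℂ)^n)⁻¹ • (1 : Matrix (Fin (2^n)) (Fin (2^n)) ℂ) = 0 := by
    apply zero_of_atomic_form_zero n
    intro v hv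
    rw [Matrix.sub_mulVec, dotProduct_sub, h v hv, Matrix.smul_mulVec,
      Matrix.one_mulVec, dotProduct_smul, atomic_norm n v hv]
    simp
  exact sub_eq_zero.mp hz
end

section
/- Let ρ_n be a density matrix on C^{2^n} with eigenvalue sequence α_1 ≥ ⋯ ≥ α_{2^n}, let m ≤ n, and set S = ∑_{i ≤ 2^{n-m}} α_i. Then the von Neumann entropy satisfies H(ρ_n) ≤ 1 - mS + n, where H(ρ_n) = -∑_i α_i log α_i (base-2 logarithm, with 0·log 0 = 0). -/
open Matrix ComplexOrder

lemma gibbs_aux {x r : ℝ} (hx : 0 ≤ x) (hr : 0 ≤ r) (h : x = 0 ∨ 0 < r) :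
    -(x * Real.log x) ≤ -(x * Real.log r) + (r - x) := by
  rcases eq_or_lt_of_le hx with hx0 | hx0
  · simp [← hx0]; linarith
  rcases h with h | h
  · exact absurd h hx0.ne'
  have h1 : Real.log (r / x) ≤ r / x - 1 := Real.log_le_sub_one_of_pos (div_pos h hx0)
  rw [Real.log_div h.ne' hx0.ne'] at h1
  have := mul_le_mul_of_nonneg_left h1 hx
  rw [mul_sub, mul_sub, mul_div_cancel₀ _ hx0.ne', mul_one] at this
  linarith

lemma real_core (n m : ℕ) (hm : m ≤ n) (α : Fin (2^n) → ℝ)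
    (hnn : ∀ i, 0 ≤ α i) (hsum : ∑ i, α i = 1) (hmono : Antitone α)
    (S : ℝ)
    (hS : S = ∑ i ∈ Finset.univ.filter (fun i : Fin (2^n) => (i : ℕ) < 2^(n-m)), α i) :
    -∑ i, α i * Real.log (α i) ≤ (1 - (m : ℝ) * S + (n : ℝ)) * Real.log 2 := by
  have hkN : 2^(n-m) ≤ 2^n := Nat.pow_le_pow_right (by norm_num) (Nat.sub_le n m)
  have hk1 : 1 ≤ 2^(n-m) := Nat.one_le_two_pow
  set A : Finset (Fin (2^n)) := Finset.univ.filter (fun i : Fin (2^n) => (i : ℕ) < 2^(n-m)) with hA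
  set B : Finset (Fin (2^n)) := Finset.univ.filter (fun i : Fin (2^n) => ¬ (i : ℕ) < 2^(n-m)) with hB
  set T : ℝ := ∑ i ∈ B, α i with hT
  have hsplit : S + T = 1 := by
    rw [hS, hT, ← hsum]
    exact Finset.sum_filter_add_sum_filter_not _ _ _
  have hS0 : 0 ≤ S := hS ▸ Finset.sum_nonneg fun i _ => hnn i
  have hT0 : 0 ≤ T := Finset.sum_nonneg fun i _ => hnn i
  have hNpos : 0 < 2^n := Nat.pow_pos (by norm_num)
  have hSpos : 0 < S := by
    rcases eq_or_lt_of_le hS0 with h0 | h0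
    · exfalso
      have h0mem : (⟨0, hNpos⟩ : Fin (2^n)) ∈ A := by simp [hA]
      have hα0 : α ⟨0, hNpos⟩ = 0 := by
        have h1 : α ⟨0, hNpos⟩ ≤ ∑ j ∈ A, α j := Finset.single_le_sum (fun j _ => hnn j) h0mem
        rw [← hS, ← h0] at h1
        exact le_antisymm h1 (hnn _)
      have hz : ∑ i, α i = 0 := Finset.sum_eq_zero fun i _ => le_antisymm
        (hα0 ▸ hmono (show (⟨0, hNpos⟩ : Fin (2^n)) ≤ i from Fin.mk_le_mk.mpr (Nat.zero_le _))) (hnn i)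
      rw [hsum] at hz; norm_num at hz
    · exact h0
  -- cardinality of B
  have hcardA : A.card = 2^(n-m) := by
    have heq : A.card = (Finset.range (2^(n-m))).card := by
      refine Finset.card_bij (fun i _ => (i : ℕ)) ?_ ?_ ?_
      · intro a ha; simp [hA] at ha ⊢; exact ha
      · intro a ha b hb hab; exact Fin.val_injective hab
      · intro b hb; simp at hb
        exact ⟨⟨b, lt_of_lt_of_le hb hkN⟩, by simp [hA, hb], rfl⟩
    simpa using heq
  have hcardB : B.card = 2^n - 2^(n-m) := by
    have h1 : A.card + B.card = 2^n := by
      rw [hA, hB, Finset.card_filter_add_card_filter_not]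
      simp
    omega
  -- comparison distribution
  set kR : ℝ := ((2^(n-m) : ℕ) : ℝ) with hkR
  set dR : ℝ := ((2^n - 2^(n-m) : ℕ) : ℝ) with hdR
  have hkRpos : 0 < kR := by rw [hkR]; push_cast; positivity
  have hdR0 : 0 ≤ dR := by rw [hdR]; positivity
  set r : Fin (2^n) → ℝ := fun i => if (i:ℕ) < 2^(n-m) then S/kR else T/dR with hrdef
  have hBzero : T = 0 → ∀ i ∈ B, α i = 0 := by
    intro h0 i hi
    exact (Finset.sum_eq_zero_iff_of_nonneg (fun j _ => hnn j)).mp (hT.symm.trans h0) i hi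
  have hdRpos : T ≠ 0 → 0 < dR := by
    intro h0
    have hBne : B.Nonempty := by
      by_contra hbe
      rw [Finset.not_nonempty_iff_eq_empty] at hbe
      exact h0 (by rw [hT, hbe, Finset.sum_empty])
    have : 0 < B.card := Finset.card_pos.mpr hBne
    rw [hdR]
    exact_mod_cast hcardB ▸ this
  -- Gibbs inequality
  have hterm : ∀ i : Fin (2^n), -(α i * Real.log (α i)) ≤ -(α i * Real.log (r i)) + (r i - α i) := by
    intro i
    by_cases hik : (i:ℕ) < 2^(n-m)
    · have : r i = S/kR := by simp [hrdef, hik]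
      rw [this]
      exact gibbs_aux (hnn i) (by positivity) (Or.inr (by positivity))
    · have hri : r i = T/dR := by simp [hrdef, hik]
      rw [hri]
      rcases eq_or_lt_of_le hT0 with h0 | h0
      · exact gibbs_aux (hnn i) (div_nonneg hT0 hdR0)
          (Or.inl (hBzero h0.symm i (by simp only [hB, Finset.mem_filter, Finset.mem_univ, true_and]; exact hik)))
      · exact gibbs_aux (hnn i) (div_nonneg hT0 hdR0)
          (Or.inr (div_pos h0 (hdRpos h0.ne')))
  -- sum of r is 1
  have hrsumA : ∑ i ∈ A, r i = S := by
    rw [Finset.sum_congr rfl (fun i hi => by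
      simp only [hA, Finset.mem_filter] at hi
      simp [hrdef, hi.2] : ∀ i ∈ A, r i = S/kR)]
    rw [Finset.sum_const, hcardA, nsmul_eq_mul]
    rw [hkR, mul_div_cancel₀ _ (ne_of_gt (hkR ▸ hkRpos))]
  have hrsumB : ∑ i ∈ B, r i = T := by
    rw [Finset.sum_congr rfl (fun i hi => by
      simp only [hB, Finset.mem_filter] at hi
      simp [hrdef, hi.2] : ∀ i ∈ B, r i = T/dR)]
    rw [Finset.sum_const, hcardB, nsmul_eq_mul]
    rcases eq_or_lt_of_le hT0 with h0 | h0
    · rw [← h0]; simp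
    · rw [← hdR, mul_div_cancel₀ _ (ne_of_gt (hdRpos h0.ne'))]
  have hrsum : ∑ i, r i = 1 := by
    rw [← Finset.sum_filter_add_sum_filter_not Finset.univ (fun i : Fin (2^n) => (i:ℕ) < 2^(n-m)) r,
      ← hA, ← hB, hrsumA, hrsumB, hsplit]
  -- the weighted log of r
  have hlogr : ∑ i, α i * Real.log (r i) = S * Real.log (S/kR) + T * Real.log (T/dR) := by
    rw [← Finset.sum_filter_add_sum_filter_not Finset.univ (fun i : Fin (2^n) => (i:ℕ) < 2^(n-m))
      (fun i => α i * Real.log (r i)), ← hA, ← hB]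
    congr 1
    · rw [Finset.sum_congr rfl (fun i hi => by
        simp only [hA, Finset.mem_filter] at hi
        simp [hrdef, hi.2] : ∀ i ∈ A, α i * Real.log (r i) = α i * Real.log (S/kR))]
      rw [← Finset.sum_mul, ← hS]
    · rw [Finset.sum_congr rfl (fun i hi => by
        simp only [hB, Finset.mem_filter] at hi
        simp [hrdef, hi.2] : ∀ i ∈ B, α i * Real.log (r i) = α i * Real.log (T/dR))]
      rw [← Finset.sum_mul, ← hT]
  have hgibbs : -∑ i, α i * Real.log (α i) ≤ -(S * Real.log (S/kR)) - T * Real.log (T/dR) := by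
    have h1 : ∑ i, -(α i * Real.log (α i)) ≤ ∑ i, (-(α i * Real.log (r i)) + (r i - α i)) :=
      Finset.sum_le_sum fun i _ => hterm i
    rw [Finset.sum_add_distrib, Finset.sum_sub_distrib, hrsum, hsum] at h1
    simp only [Finset.sum_neg_distrib] at h1
    rw [hlogr] at h1
    linarith
  -- bound the pieces
  have hlogk : Real.log kR = ((n:ℝ) - m) * Real.log 2 := by
    rw [hkR]; push_cast
    rw [Real.log_pow]
    rw [Nat.cast_sub hm]
  have hpiece1 : -(S * Real.log (S/kR)) = -(S * Real.log S) + S * (((n:ℝ) - m) * Real.log 2) := by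
    rw [Real.log_div hSpos.ne' hkRpos.ne', hlogk]; ring
  have hpiece2 : -(T * Real.log (T/dR)) ≤ -(T * Real.log T) + T * ((n:ℝ) * Real.log 2) := by
    rcases eq_or_lt_of_le hT0 with h0 | h0
    · rw [← h0]; simp
    · have hd : 0 < dR := hdRpos h0.ne'
      rw [Real.log_div h0.ne' hd.ne']
      have hlogd : Real.log dR ≤ (n:ℝ) * Real.log 2 := by
        have hle : dR ≤ (2:ℝ)^n := by
          rw [hdR]
          calc ((2^n - 2^(n-m) : ℕ) : ℝ) ≤ ((2^n : ℕ) : ℝ) := by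
                exact_mod_cast Nat.sub_le _ _
            _ = (2:ℝ)^n := by push_cast; ring
        calc Real.log dR ≤ Real.log ((2:ℝ)^n) := Real.log_le_log hd hle
          _ = (n:ℝ) * Real.log 2 := by rw [Real.log_pow]
      nlinarith
  have hbinent : -(S * Real.log S) - T * Real.log T ≤ Real.log 2 := by
    have hTS : T = 1 - S := by linarith
    have := Real.binEntropy_le_log_two (p := S)
    rw [Real.binEntropy, Real.log_inv, Real.log_inv] at this
    rw [hTS]
    nlinarith
  have hring : (1 - (m:ℝ) * S + (n:ℝ)) * Real.log 2 =
      Real.log 2 + S * (((n:ℝ) - m) * Real.log 2) + (1 - S) * ((n:ℝ) * Real.log 2) := by ring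
  have hTS : T = 1 - S := by linarith
  rw [hring]
  rw [hTS] at hgibbs hpiece2 hbinent
  linarith

/-- for a density matrix `ρ_n` on `ℂ^(2^n)` with nonincreasing
eigenvalue sequence `α`, `m ≤ n`, and `S` the sum of the top `2^{n-m}` eigenvalues,
the von Neumann entropy satisfies `H(ρ_n) = -∑ αᵢ log₂ αᵢ ≤ 1 - mS + n`. -/
theorem entropy_le_of_top_eigenvalue_mass (n m : ℕ) (hm : m ≤ n)
    (ρ : Matrix (Fin (2^n)) (Fin (2^n)) ℂ) (hpsd : ρ.PosSemidef) (htr : ρ.trace = 1)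
    (α : Fin (2^n) → ℝ) (hmono : Antitone α)
    (ψ : Fin (2^n) → (Fin (2^n) → ℂ))
    (hortho : ∀ i j, star (ψ i) ⬝ᵥ ψ j = if i = j then (1:ℂ) else 0)
    (heig : ∀ i, ρ *ᵥ ψ i = (α i : ℂ) • ψ i)
    (S : ℝ)
    (hS : S = ∑ i ∈ Finset.univ.filter (fun i : Fin (2^n) => (i : ℕ) < 2^(n-m)), α i) :
    -∑ i, α i * Real.logb 2 (α i) ≤ 1 - (m : ℝ) * S + (n : ℝ) := by
  have hψ1 : ∀ i, star (ψ i) ⬝ᵥ ψ i = 1 := fun i => by simpa using hortho i i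
  have hnn : ∀ i, 0 ≤ α i := by
    intro i
    have h0 : (0:ℂ) ≤ star (ψ i) ⬝ᵥ (ρ *ᵥ ψ i) := hpsd.dotProduct_mulVec_nonneg (ψ i)
    rw [heig i, dotProduct_smul, hψ1 i, smul_eq_mul, mul_one] at h0
    exact_mod_cast h0
  have hsum : ∑ i, α i = 1 := by
    set U : Matrix (Fin (2^n)) (Fin (2^n)) ℂ := Matrix.of (fun i j => ψ j i) with hU
    have hUU : Uᴴ * U = 1 := by
      ext i j
      simp only [Matrix.mul_apply, Matrix.conjTranspose_apply, hU, Matrix.of_apply,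
        Matrix.one_apply]
      simpa [dotProduct] using hortho i j
    have hUU' : U * Uᴴ = 1 := mul_eq_one_comm.mp hUU
    have hUD : ρ * U = U * Matrix.diagonal (fun i => (α i : ℂ)) := by
      ext i j
      have hij := congrFun (heig j) i
      simp only [Matrix.mulVec, dotProduct, Pi.smul_apply, smul_eq_mul] at hij
      rw [Matrix.mul_diagonal]
      simp only [Matrix.mul_apply, hU, Matrix.of_apply]
      rw [hij]; ring
    have htr2 : ρ.trace = ∑ i, (α i : ℂ) := by
      calc ρ.trace = (ρ * (U * Uᴴ)).trace := by rw [hUU', Matrix.mul_one]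
        _ = (ρ * U * Uᴴ).trace := by rw [Matrix.mul_assoc]
        _ = (U * Matrix.diagonal (fun i => (α i : ℂ)) * Uᴴ).trace := by rw [hUD]
        _ = (Uᴴ * (U * Matrix.diagonal (fun i => (α i : ℂ)))).trace := Matrix.trace_mul_comm _ _
        _ = ((Uᴴ * U) * Matrix.diagonal (fun i => (α i : ℂ))).trace := by rw [Matrix.mul_assoc]
        _ = (Matrix.diagonal (fun i => (α i : ℂ))).trace := by rw [hUU, Matrix.one_mul]
        _ = ∑ i, (α i : ℂ) := Matrix.trace_diagonal _
    have : (∑ i, (α i : ℂ)) = 1 := htr2.symm.trans htr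
    exact_mod_cast this
  have hcore := real_core n m hm α hnn hsum hmono S hS
  have h2 : (0:ℝ) < Real.log 2 := Real.log_pos one_lt_two
  have heq : ∑ i, α i * Real.logb 2 (α i) = (∑ i, α i * Real.log (α i)) / Real.log 2 := by
    rw [Finset.sum_div]
    exact Finset.sum_congr rfl fun i _ => by rw [Real.logb, mul_div_assoc]
  rw [heq, ← neg_div]
  rw [div_le_iff₀ h2]
  exact hcore
end

section
/- Let ρ = (ρ_n)_n be a state (coherent sequence of density matrices) such that there exists c ∈ ℕ with H(ρ_n) > n - c for infinitely many n, where H is the von Neumann entropy in base 2. Then for every δ > 0 and every m with mδ > c + 1, it is not the case that for almost every n the sum of the 2^{n-m} largest eigenvalues of ρ_n exceeds δ. (Equivalently, ρ passes every quantum Martin-Löf test at every level δ, i.e. ρ is quantum Martin-Löf random.) -/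
open Matrix ComplexOrder

/-- Partial trace over the last qubit: the index of `ℂ^(2^(n+1))` is written as
`i + 2^n · b` with `b` the last qubit. -/
def ptraceLast {n : ℕ} (M : Matrix (Fin (2^(n+1))) (Fin (2^(n+1))) ℂ) :
    Matrix (Fin (2^n)) (Fin (2^n)) ℂ :=
  fun i j =>
    M ⟨(i : ℕ), by have := i.isLt; rw [pow_succ]; omega⟩
      ⟨(j : ℕ), by have := j.isLt; rw [pow_succ]; omega⟩
    + M ⟨(i : ℕ) + 2^n, by have := i.isLt; rw [pow_succ]; omega⟩
      ⟨(j : ℕ) + 2^n, by have := j.isLt; rw [pow_succ]; omega⟩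

lemma gibbs_term {p q : ℝ} (hp : 0 ≤ p) (hq : 0 < q) :
    p * Real.logb 2 q - p * Real.logb 2 p ≤ (q - p) / Real.log 2 := by
  have h2 : (0:ℝ) < Real.log 2 := Real.log_pos one_lt_two
  rcases eq_or_lt_of_le hp with h | h
  · rw [← h]
    simp
    positivity
  · have hlog : Real.log (q / p) ≤ q / p - 1 := Real.log_le_sub_one_of_pos (by positivity)
    rw [Real.log_div hq.ne' h.ne'] at hlog
    have key : p * (Real.log q - Real.log p) ≤ q - p := by
      have h1 : p * (q / p - 1) = q - p := by field_simp
      nlinarith [mul_le_mul_of_nonneg_left hlog h.le]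
    have : p * Real.logb 2 q - p * Real.logb 2 p = p * (Real.log q - Real.log p) / Real.log 2 := by
      unfold Real.logb; ring
    rw [this]
    exact div_le_div_of_nonneg_right key h2.le

lemma gibbs {ι : Type*} [Fintype ι] (p q : ι → ℝ) (hp : ∀ i, 0 ≤ p i)
    (hq : ∀ i, 0 < q i) (hps : 1 ≤ ∑ i, p i) (hqs : ∑ i, q i ≤ 1) :
    -∑ i, p i * Real.logb 2 (p i) ≤ -∑ i, p i * Real.logb 2 (q i) := by
  have h2 : (0:ℝ) < Real.log 2 := Real.log_pos one_lt_two
  have hsum := Finset.sum_le_sum (fun i (_ : i ∈ Finset.univ) => gibbs_term (hp i) (hq i))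
  rw [Finset.sum_sub_distrib, ← Finset.sum_div, Finset.sum_sub_distrib] at hsum
  have hle : (∑ i, q i - ∑ i, p i) / Real.log 2 ≤ 0 :=
    div_nonpos_of_nonpos_of_nonneg (by linarith) h2.le
  linarith


/-- if a state `ρ = (ρ_n)_n` (a coherent sequence of density matrices,
with eigenvalues `α n` nonincreasing) has von Neumann entropy `H(ρ_n) > n - c` for
infinitely many `n`, then for every `δ > 0` and every `m` with `mδ > c + 1`, it is not
the case that for almost every `n` the sum of the `2^{n-m}` largest eigenvalues of
`ρ_n` exceeds `δ`. -/
theorem state_high_entropy_passes_tests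
    (ρ : (n : ℕ) → Matrix (Fin (2^n)) (Fin (2^n)) ℂ)
    (hpsd : ∀ n, (ρ n).PosSemidef) (htr : ∀ n, (ρ n).trace = 1)
    (hcoh : ∀ n, ptraceLast (ρ (n+1)) = ρ n)
    (α : (n : ℕ) → Fin (2^n) → ℝ) (hmono : ∀ n, Antitone (α n))
    (ψ : (n : ℕ) → Fin (2^n) → (Fin (2^n) → ℂ))
    (hortho : ∀ n i j, star (ψ n i) ⬝ᵥ ψ n j = if i = j then (1:ℂ) else 0)
    (heig : ∀ n i, ρ n *ᵥ ψ n i = (α n i : ℂ) • ψ n i)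
    (c : ℕ)
    (hent : ∃ᶠ n : ℕ in Filter.atTop,
      (n : ℝ) - (c : ℝ) < -∑ i, α n i * Real.logb 2 (α n i))
    (δ : ℝ) (hδ : 0 < δ) (m : ℕ) (hm : (c : ℝ) + 1 < (m : ℝ) * δ) :
    ¬ (∀ᶠ n in Filter.atTop,
        δ < ∑ i ∈ Finset.univ.filter (fun i : Fin (2^n) => (i : ℕ) < 2^(n-m)), α n i) := by
  intro hev
  -- eigenvalues are nonnegative
  have hα0 : ∀ n i, 0 ≤ α n i := by
    intro n i
    have h := (hpsd n).dotProduct_mulVec_nonneg (ψ n i)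
    rw [heig n i, dotProduct_smul, hortho n i i] at h
    simp at h
    exact_mod_cast h
  -- eigenvalues sum to 1
  have hα1 : ∀ n, ∑ i, α n i = 1 := by
    intro n
    set U : Matrix (Fin (2^n)) (Fin (2^n)) ℂ := Matrix.of (fun i j => ψ n j i) with hU
    have hUU : Uᴴ * U = 1 := by
      ext i j
      have h := hortho n i j
      simp only [dotProduct, Pi.star_apply] at h
      simp only [Matrix.mul_apply, Matrix.conjTranspose_apply, hU, Matrix.of_apply,
        Matrix.one_apply]
      exact h
    have hUU' : U * Uᴴ = 1 := mul_eq_one_comm.mp hUU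
    have hcol : ∀ j k, (ρ n * U) k j = (α n j : ℂ) * ψ n j k := by
      intro j k
      have h := congrFun (heig n j) k
      simp only [Matrix.mulVec, dotProduct, Pi.smul_apply, smul_eq_mul] at h
      simpa [Matrix.mul_apply, hU] using h
    have hdiag : ∀ j, (Uᴴ * (ρ n * U)) j j = (α n j : ℂ) := by
      intro j
      rw [Matrix.mul_apply]
      have h := hortho n j j
      simp only [dotProduct, Pi.star_apply, if_pos rfl, eq_self_iff_true, if_true] at h
      calc ∑ k, Uᴴ j k * (ρ n * U) k j
          = ∑ k, (α n j : ℂ) * (star (ψ n j k) * ψ n j k) := by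
            apply Finset.sum_congr rfl
            intro k _
            rw [hcol j k, Matrix.conjTranspose_apply]
            simp [hU]
            ring
        _ = (α n j : ℂ) * ∑ k, star (ψ n j k) * ψ n j k := by rw [Finset.mul_sum]
        _ = (α n j : ℂ) := by rw [h, mul_one]
    have htr' : (ρ n).trace = ∑ j, (α n j : ℂ) := by
      calc (ρ n).trace = (ρ n * (U * Uᴴ)).trace := by rw [hUU', Matrix.mul_one]
        _ = (Uᴴ * (ρ n * U)).trace := by
            rw [← Matrix.mul_assoc, Matrix.trace_mul_comm]
        _ = ∑ j, (Uᴴ * (ρ n * U)) j j := by simp [Matrix.trace, Matrix.diag]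
        _ = ∑ j, (α n j : ℂ) := by simp [hdiag]
    rw [htr n] at htr'
    exact_mod_cast htr'.symm
  -- pick a good n
  obtain ⟨n, hH, hS, hmn⟩ :
      ∃ n : ℕ, ((n : ℝ) - (c : ℝ) < -∑ i, α n i * Real.logb 2 (α n i)) ∧
        (δ < ∑ i ∈ Finset.univ.filter (fun i : Fin (2^n) => (i : ℕ) < 2^(n-m)), α n i) ∧
        m ≤ n := by
    have := (hent.and_eventually (hev.and (Filter.eventually_ge_atTop m))).exists
    obtain ⟨n, h1, h2, h3⟩ := this
    exact ⟨n, h1, h2, h3⟩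
  set k := 2^(n-m) with hk
  set A : Finset (Fin (2^n)) := Finset.univ.filter (fun i : Fin (2^n) => (i : ℕ) < k) with hA
  set S : ℝ := ∑ i ∈ A, α n i with hSdef
  -- counting
  have hcardA : A.card ≤ k := by
    have h1 : A.card ≤ (Finset.range k).card :=
      Finset.card_le_card_of_injOn (fun i => (i : ℕ))
        (fun a ha => by
          rw [Finset.mem_coe, Finset.mem_filter] at ha
          exact Finset.mem_coe.mpr (Finset.mem_range.mpr ha.2))
        (fun a _ b _ h => Fin.val_injective h)
    simpa using h1
  have hcardB : (Finset.univ.filter (fun i : Fin (2^n) => ¬ ((i:ℕ) < k))).card ≤ 2^n := by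
    calc _ ≤ (Finset.univ : Finset (Fin (2^n))).card := Finset.card_filter_le _ _
      _ = 2^n := by simp
  -- the comparison distribution
  set q : Fin (2^n) → ℝ := fun i => if (i:ℕ) < k then 1/(2*k) else 1/(2*2^n) with hq
  have hkpos : (0:ℝ) < k := by positivity
  have hNpos : (0:ℝ) < (2:ℝ)^n := by positivity
  have hqpos : ∀ i, 0 < q i := by
    intro i; rw [hq]; dsimp only; split <;> positivity
  have hqsum : ∑ i, q i ≤ 1 := by
    rw [← Finset.sum_filter_add_sum_filter_not Finset.univ (fun i : Fin (2^n) => (i:ℕ) < k)]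
    have e1 : ∑ i ∈ Finset.univ.filter (fun i : Fin (2^n) => (i:ℕ) < k), q i
        = A.card * (1/(2*(k:ℝ))) := by
      have hval : ∀ i ∈ Finset.univ.filter (fun i : Fin (2^n) => (i:ℕ) < k),
          q i = 1/(2*(k:ℝ)) := by
        intro i hi
        rw [Finset.mem_filter] at hi
        rw [hq]; simp only; rw [if_pos hi.2]
      rw [Finset.sum_congr rfl hval, Finset.sum_const, nsmul_eq_mul, hA]
    have e2 : ∑ i ∈ Finset.univ.filter (fun i : Fin (2^n) => ¬((i:ℕ) < k)), q i
        = (Finset.univ.filter (fun i : Fin (2^n) => ¬((i:ℕ) < k))).card * (1/(2*(2:ℝ)^n)) := by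
      have hval : ∀ i ∈ Finset.univ.filter (fun i : Fin (2^n) => ¬((i:ℕ) < k)),
          q i = 1/(2*(2:ℝ)^n) := by
        intro i hi
        rw [Finset.mem_filter] at hi
        rw [hq]; simp only; rw [if_neg hi.2]
      rw [Finset.sum_congr rfl hval, Finset.sum_const, nsmul_eq_mul]
    rw [e1, e2]
    have b1 : (A.card : ℝ) * (1/(2*(k:ℝ))) ≤ 1/2 := by
      have hAk : (A.card : ℝ) ≤ (k:ℝ) := by exact_mod_cast hcardA
      calc (A.card : ℝ) * (1/(2*(k:ℝ))) ≤ (k:ℝ) * (1/(2*(k:ℝ))) := by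
            apply mul_le_mul_of_nonneg_right hAk (by positivity)
        _ = 1/2 := by field_simp
    have b2 : ((Finset.univ.filter (fun i : Fin (2^n) => ¬((i:ℕ) < k))).card : ℝ) * (1/(2*(2:ℝ)^n)) ≤ 1/2 := by
      have hc : ((Finset.univ.filter (fun i : Fin (2^n) => ¬((i:ℕ) < k))).card : ℝ) ≤ (2:ℝ)^n := by
        exact_mod_cast hcardB
      calc _ ≤ (2:ℝ)^n * (1/(2*(2:ℝ)^n)) := by
            apply mul_le_mul_of_nonneg_right hc (by positivity)
        _ = 1/2 := by field_simp
    linarith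
  -- the Gibbs bound
  have hgibbs := gibbs (α n) q (hα0 n) hqpos (le_of_eq (hα1 n).symm) hqsum
  -- compute the right hand side
  have hlog2 : Real.logb 2 2 = 1 := Real.logb_self_eq_one one_lt_two
  have hlogk : Real.logb 2 (1/(2*(k:ℝ))) = -(1 + ((n-m : ℕ) : ℝ)) := by
    have hcast : ((k : ℕ) : ℝ) = (2:ℝ)^(n-m) := by rw [hk]; push_cast; ring
    rw [hcast, one_div, Real.logb_inv, Real.logb_mul (by norm_num) (by positivity),
      hlog2, Real.logb_pow, hlog2, mul_one]
  have hlogN : Real.logb 2 (1/(2*(2:ℝ)^n)) = -(1 + (n : ℝ)) := by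
    rw [one_div, Real.logb_inv, Real.logb_mul (by norm_num) (by positivity),
      hlog2, Real.logb_pow, hlog2, mul_one]
  have hsplit : ∑ i, α n i * Real.logb 2 (q i)
      = S * (-(1 + ((n-m : ℕ) : ℝ))) + (1 - S) * (-(1 + (n : ℝ))) := by
    rw [← Finset.sum_filter_add_sum_filter_not Finset.univ (fun i : Fin (2^n) => (i:ℕ) < k)]
    have e1 : ∑ i ∈ Finset.univ.filter (fun i : Fin (2^n) => (i:ℕ) < k), α n i * Real.logb 2 (q i)
        = S * (-(1 + ((n-m : ℕ) : ℝ))) := by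
      rw [hSdef, hA, Finset.sum_mul]
      apply Finset.sum_congr rfl
      intro i hi
      rw [Finset.mem_filter] at hi
      rw [hq]; simp only; rw [if_pos hi.2, hlogk]
    have e2 : ∑ i ∈ Finset.univ.filter (fun i : Fin (2^n) => ¬((i:ℕ) < k)), α n i * Real.logb 2 (q i)
        = (1 - S) * (-(1 + (n : ℝ))) := by
      have hS' : ∑ i ∈ Finset.univ.filter (fun i : Fin (2^n) => ¬((i:ℕ) < k)), α n i = 1 - S := by
        have := Finset.sum_filter_add_sum_filter_not Finset.univ
          (fun i : Fin (2^n) => (i:ℕ) < k) (α n)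
        rw [hα1 n] at this
        rw [hSdef, hA]
        linarith
      rw [← hS', Finset.sum_mul]
      apply Finset.sum_congr rfl
      intro i hi
      rw [Finset.mem_filter] at hi
      rw [hq]; simp only; rw [if_neg hi.2, hlogN]
    rw [e1, e2]
  -- put it together
  have hnm : ((n - m : ℕ) : ℝ) = (n : ℝ) - (m : ℝ) := by
    rw [Nat.cast_sub hmn]
  have hfinal : (n : ℝ) - (c : ℝ) < 1 + (n : ℝ) - (m : ℝ) * S := by
    calc (n : ℝ) - (c : ℝ) < -∑ i, α n i * Real.logb 2 (α n i) := hH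
      _ ≤ -∑ i, α n i * Real.logb 2 (q i) := hgibbs
      _ = -(S * (-(1 + ((n-m : ℕ) : ℝ))) + (1 - S) * (-(1 + (n : ℝ)))) := by rw [hsplit]
      _ = 1 + (n : ℝ) - (m : ℝ) * S := by rw [hnm]; ring
  have hm0 : (0:ℝ) ≤ (m : ℝ) := Nat.cast_nonneg m
  -- δ < S but m*S < c+1 < m*δ
  nlinarith [hS, hfinal, hm]
end

section
/- Let (α_i)_{i ≤ 2^n} be a probability distribution with α_1 ≥ α_2 ≥ ⋯, let ε ∈ (0,1), δ ∈ (0, 1/2), and suppose ∑_{i ≤ ⌈2^{nε}⌉} α_i ≤ δ and α_1 < δ. Then the Shannon entropy satisfies H(α) > (1 - 2δ)·(log(1-δ) - log δ + nε). In particular H(α)/n > (1-2δ)ε + o(1). -/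
/-- if a nonincreasing probability distribution `α` on `2^n` points has
`∑_{i ≤ ⌈2^{nε}⌉} αᵢ ≤ δ` and `α₁ < δ` (with `ε ∈ (0,1)`, `δ ∈ (0,1/2)`), then its
Shannon entropy satisfies `H(α) > (1-2δ)(log(1-δ) - log δ + nε)`. -/
theorem entropy_lower_bound_of_spread (n : ℕ) (ε δ : ℝ)
    (hε : ε ∈ Set.Ioo (0:ℝ) 1) (hδ : δ ∈ Set.Ioo (0:ℝ) (1/2))
    (α : Fin (2^n) → ℝ) (hmono : Antitone α) (hnn : ∀ i, 0 ≤ α i)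
    (hsum : ∑ i, α i = 1)
    (K : ℕ) (hK : K = ⌈(2:ℝ) ^ ((n : ℝ) * ε)⌉₊)
    (hhead : ∑ i ∈ Finset.univ.filter (fun i : Fin (2^n) => (i : ℕ) < K), α i ≤ δ)
    (hα1 : α ⟨0, Nat.two_pow_pos n⟩ < δ) :
    (1 - 2*δ) * (Real.logb 2 (1-δ) - Real.logb 2 δ + (n : ℝ) * ε) <
      -∑ i, α i * Real.logb 2 (α i) := by
  obtain ⟨hε0, hε1⟩ := hε
  obtain ⟨hδ0, hδ2⟩ := hδ
  have hδ1 : δ < 1 := by linarith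
  have hαδ : ∀ i : Fin (2^n), α i < δ := by
    intro i
    exact lt_of_le_of_lt (hmono (show (⟨0, Nat.two_pow_pos n⟩ : Fin (2^n)) ≤ i from
      Fin.mk_le_of_le_val (Nat.zero_le _))) hα1
  have hpow_pos : (0:ℝ) < (2:ℝ) ^ ((n : ℝ) * ε) := Real.rpow_pos_of_pos (by norm_num) _
  have hKge : (2:ℝ) ^ ((n : ℝ) * ε) ≤ (K : ℝ) := hK ▸ Nat.le_ceil _
  have hKpos : 0 < (K : ℝ) := lt_of_lt_of_le hpow_pos hKge
  set A : ℝ := (n : ℝ) * ε - Real.logb 2 δ with hA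
  have hlogδ : Real.logb 2 δ < 0 := Real.logb_neg (by norm_num) hδ0 hδ1
  have hnε : (0:ℝ) ≤ (n : ℝ) * ε := by positivity
  have hApos : 0 < A := by simp only [hA]; linarith
  -- split sum into head and tail
  set T := Finset.univ.filter (fun i : Fin (2^n) => ¬ ((i : ℕ) < K)) with hT
  -- tail sum is ≥ 1 - δ
  have hsplit : (∑ i ∈ Finset.univ.filter (fun i : Fin (2^n) => (i : ℕ) < K), α i)
      + ∑ i ∈ T, α i = 1 := by
    rw [hT, Finset.sum_filter_add_sum_filter_not, hsum]
  have htail : (1:ℝ) - δ ≤ ∑ i ∈ T, α i := by linarith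
  -- each tail element is ≤ δ / K
  have hbound : ∀ i ∈ T, α i ≤ δ / K := by
    intro i hi
    simp only [hT, Finset.mem_filter, not_lt] at hi
    have hKi : K ≤ (i : ℕ) := hi.2
    have hKlt : K < 2^n := lt_of_le_of_lt hKi i.isLt
    have hcard : (Finset.univ.filter (fun j : Fin (2^n) => (j : ℕ) < K)).card = K := by
      have : Finset.univ.filter (fun j : Fin (2^n) => (j : ℕ) < K)
          = Finset.Iio (⟨K, hKlt⟩ : Fin (2^n)) := by
        ext j
        simp [Fin.lt_def]
      rw [this, Fin.card_Iio]
    have hge : (K : ℝ) * α i ≤ ∑ j ∈ Finset.univ.filter (fun j : Fin (2^n) => (j : ℕ) < K), α j := by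
      calc (K : ℝ) * α i
          = ∑ _j ∈ Finset.univ.filter (fun j : Fin (2^n) => (j : ℕ) < K), α i := by
            rw [Finset.sum_const, hcard, nsmul_eq_mul]
        _ ≤ ∑ j ∈ Finset.univ.filter (fun j : Fin (2^n) => (j : ℕ) < K), α j := by
            apply Finset.sum_le_sum
            intro j hj
            simp only [Finset.mem_filter] at hj
            exact hmono (Fin.le_def.mpr (le_of_lt (lt_of_lt_of_le hj.2 hKi)))
    have : (K : ℝ) * α i ≤ δ := le_trans hge hhead
    rw [div_eq_mul_inv]
    calc α i = (K : ℝ) * α i * (K:ℝ)⁻¹ := by field_simp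
      _ ≤ δ * (K:ℝ)⁻¹ := by
          apply mul_le_mul_of_nonneg_right this (by positivity)
  -- each tail term of entropy is ≥ α i * A
  have hterm : ∀ i ∈ T, α i * A ≤ -(α i * Real.logb 2 (α i)) := by
    intro i hi
    rcases eq_or_lt_of_le (hnn i) with h0 | h0
    · rw [← h0]; simp
    · have h1 : α i ≤ δ * ((2:ℝ) ^ ((n : ℝ) * ε))⁻¹ := by
        refine le_trans (hbound i hi) ?_
        rw [div_eq_mul_inv]
        apply mul_le_mul_of_nonneg_left _ (le_of_lt hδ0)
        exact inv_anti₀ hpow_pos hKge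
      have hlog : Real.logb 2 (α i) ≤ Real.logb 2 δ - (n : ℝ) * ε := by
        have := Real.logb_le_logb_of_le (b := 2) (by norm_num) h0 h1
        rwa [Real.logb_mul (ne_of_gt hδ0) (by positivity), Real.logb_inv,
          Real.logb_rpow (by norm_num) (by norm_num), ← sub_eq_add_neg] at this
      nlinarith [mul_le_mul_of_nonneg_left hlog (le_of_lt h0)]
  have hsum_tail : (1 - δ) * A ≤ ∑ i ∈ T, -(α i * Real.logb 2 (α i)) := by
    calc (1 - δ) * A ≤ (∑ i ∈ T, α i) * A := by
          apply mul_le_mul_of_nonneg_right htail (le_of_lt hApos)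
      _ = ∑ i ∈ T, α i * A := by rw [Finset.sum_mul]
      _ ≤ _ := Finset.sum_le_sum hterm
  have hfull : ∑ i ∈ T, -(α i * Real.logb 2 (α i)) ≤ -∑ i, α i * Real.logb 2 (α i) := by
    rw [← Finset.sum_neg_distrib]
    apply Finset.sum_le_sum_of_subset_of_nonneg (Finset.filter_subset _ _)
    intro i _ _
    have : Real.logb 2 (α i) ≤ 0 :=
      Real.logb_nonpos (by norm_num) (hnn i) (le_of_lt (lt_trans (hαδ i) hδ1))
    simp only [neg_nonneg]
    exact mul_nonpos_of_nonneg_of_nonpos (hnn i) this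
  have hL : Real.logb 2 (1 - δ) < 0 := Real.logb_neg (by norm_num) (by linarith) (by linarith)
  have hfinal : (1 - 2*δ) * (Real.logb 2 (1-δ) - Real.logb 2 δ + (n : ℝ) * ε) < (1 - δ) * A := by
    simp only [hA]
    nlinarith
  linarith
end
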